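/- arXiv:1105.6239 — 11 statements merged into one kernel-verified Lean document; each statement's English description precedes it below -/
import Mathlib

section
/- If S is a compact subset of ℝ^d with reach(S) ≥ r > 0, then S is r-convex, i.e., S equals the intersection of the complements of all open balls of radius r that are disjoint from S. -/
/-!
Let `x ∉ S` lie at distance `δ < r` from `S`, let `q` be its nearest point and `u` the unit vector
from `q` to `x`. By continuous induction on `t ∈ [δ, r)`, the point `q + t • u` lies at distance
exactly `t` from `S`. Hence the open ball of radius `r` about `q + r • u` misses `S`, and it
contains `x`.

For the induction step at `c = q + t • u`, maximise the distance to `S` over a small closed ball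
about `c`. At a maximiser `z` with nearest point `p`, the distance to `S` increases strictly in
every direction making an acute angle with `z - p`, because nearest points depend continuously on
`z` (compactness plus uniqueness). So `z` is the point of the sphere in direction `z - p`, and
comparing distances forces `z = q + (t + ρ) • u`. This replaces the Brouwer fixed point argument
in Federer's proof.
-/

open Metric Set

/-- The `r`-convex hull: intersection of complements of all open balls of radius `r`
disjoint from `A`. -/
def rHull {d : ℕ} (r : ℝ) (A : Set (EuclideanSpace ℝ (Fin d))) :
    Set (EuclideanSpace ℝ (Fin d)) :=
  ⋂ y ∈ {y : EuclideanSpace ℝ (Fin d) | Metric.ball y r ∩ A = ∅}, (Metric.ball y r)ᶜ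

/-- `S` is `r`-convex if it equals its `r`-convex hull. -/
def RConvex {d : ℕ} (r : ℝ) (S : Set (EuclideanSpace ℝ (Fin d))) : Prop :=
  rHull r S = S

/-- `reach(S) ≥ r`: every point at distance `< r` from `S` has a unique nearest point
in `S`. -/
def ReachGe {d : ℕ} (S : Set (EuclideanSpace ℝ (Fin d))) (r : ℝ) : Prop :=
  ∀ x : EuclideanSpace ℝ (Fin d), Metric.infDist x S < r →
    ∃! y, y ∈ S ∧ dist x y = Metric.infDist x S

open Filter Topology
open scoped RealInnerProductSpace

theorem IsCompact.exists_pos_dist_le_of_unique_nearest {α : Type*} [PseudoMetricSpace α]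
    {S : Set α} (hS : IsCompact S) {z q : α} (huniq : ∀ y ∈ S, dist z y = infDist z S → y = q)
    {γ : ℝ} (hγ : 0 < γ) : ∃ β > 0, ∀ s ∈ S, dist z s ≤ infDist z S + β → dist s q ≤ γ := by
  obtain hfar | hfar := (S ∩ {s | γ ≤ dist s q}).eq_empty_or_nonempty
  · exact ⟨1, one_pos, fun s hs _ => not_lt.1 fun h => hfar.subset ⟨hs, h.le⟩⟩
  have hK : IsCompact (S ∩ {s | γ ≤ dist s q}) :=
    hS.inter_right (isClosed_le continuous_const (continuous_id.dist continuous_const))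
  obtain ⟨s₀, ⟨hs₀S, hs₀q⟩, hmin⟩ :=
    hK.exists_isMinOn hfar (continuous_const.dist continuous_id).continuousOn
  have hgap : infDist z S < dist z s₀ :=
    (infDist_le_dist_of_mem hs₀S).lt_of_ne fun h =>
      (hγ.trans_le hs₀q).ne' (by rw [huniq s₀ hs₀S h.symm, dist_self])
  refine ⟨(dist z s₀ - infDist z S) / 2, by linarith, fun s hs hle => ?_⟩
  by_contra! hsq
  have : dist z s₀ ≤ dist z s := hmin ⟨hs, hsq.le⟩
  linarith

section InnerProductSpace

variable {F : Type*} [NormedAddCommGroup F] [InnerProductSpace ℝ F]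

theorem IsCompact.eventually_infDist_lt_infDist_add_smul {S : Set F} (hS : IsCompact S)
    {z q v : F} (hqS : q ∈ S) (huniq : ∀ y ∈ S, dist z y = infDist z S → y = q)
    (hv : 0 < ⟪z - q, v⟫) : ∀ᶠ ε in 𝓝[>] (0 : ℝ), infDist z S < infDist (z + ε • v) S := by
  obtain ⟨β, hβ, hnear⟩ := hS.exists_pos_dist_le_of_unique_nearest huniq
    (div_pos hv (by positivity : (0 : ℝ) < ‖v‖ + 1))
  filter_upwards [Ioo_mem_nhdsGT (div_pos hβ (by positivity : (0 : ℝ) < ‖v‖ + 1))]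
    with ε ⟨hε, hεβ⟩
  obtain ⟨s, hs, hws⟩ := hS.exists_infDist_eq_dist ⟨q, hqS⟩ (z + ε • v)
  rw [hws]
  have hεv : ε * ‖v‖ < β := by
    rw [lt_div_iff₀ (by positivity)] at hεβ
    nlinarith [norm_nonneg v]
  rcases le_or_gt (dist z s) (infDist z S + β) with hzs | hzs
  · -- `s` is close to `q`, so `v` still points away from `s`
    have hsv : 0 < ⟪z - s, v⟫ := by
      have hsq := hnear s hs hzs
      have : ⟪s - q, v⟫ < ⟪z - q, v⟫ := by
        calc ⟪s - q, v⟫ ≤ dist s q * ‖v‖ := by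
              rw [dist_eq_norm]; exact real_inner_le_norm _ _
          _ ≤ ⟪z - q, v⟫ / (‖v‖ + 1) * ‖v‖ := by gcongr
          _ < ⟪z - q, v⟫ := by
              rw [div_mul_eq_mul_div, div_lt_iff₀ (by positivity)]; nlinarith
      have hsplit : z - s = (z - q) - (s - q) := by abel
      rw [hsplit, inner_sub_left]
      linarith
    have hsq : dist z s ^ 2 < dist (z + ε • v) s ^ 2 := by
      have hexp : z + ε • v - s = (z - s) + ε • v := by abel
      rw [dist_eq_norm, dist_eq_norm, hexp, norm_add_sq_real, inner_smul_right]
      nlinarith [sq_nonneg ‖ε • v‖]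
    exact (infDist_le_dist_of_mem hs).trans_lt (lt_of_pow_lt_pow_left₀ 2 dist_nonneg hsq)
  · have := dist_triangle z (z + ε • v) s
    rw [dist_self_add_right, norm_smul, Real.norm_of_nonneg hε.le] at this
    linarith

theorem inner_sub_pos_of_norm_le {x a : F} (h : ‖a‖ ≤ ‖x‖) (hne : a ≠ x) : 0 < ⟪x, x - a⟫ := by
  have hpos : 0 < ‖x - a‖ ^ 2 := by
    have := norm_pos_iff.2 (sub_ne_zero.2 hne.symm); positivity
  have hsq : ‖a‖ ^ 2 ≤ ‖x‖ ^ 2 := by gcongr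
  rw [norm_sub_sq_real] at hpos
  rw [inner_sub_right, real_inner_self_eq_norm_sq]
  linarith

theorem IsCompact.eq_of_isMaxOn_infDist_closedBall {S : Set F} (hS : IsCompact S) {c z q : F}
    {ρ : ℝ} (hρ : 0 < ρ) (hz : z ∈ closedBall c ρ)
    (hmax : IsMaxOn (infDist · S) (closedBall c ρ) z) (hqS : q ∈ S) (hzq : z ≠ q)
    (huniq : ∀ y ∈ S, dist z y = infDist z S → y = q) :
    z = c + (ρ / ‖z - q‖) • (z - q) := by
  set p := c + (ρ / ‖z - q‖) • (z - q)
  have hzq' : 0 < ‖z - q‖ := norm_pos_iff.2 (sub_ne_zero.2 hzq)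
  have hp : dist p c = ρ := by
    rw [dist_self_add_left, norm_smul, Real.norm_of_nonneg (by positivity),
      div_mul_cancel₀ _ hzq'.ne']
  by_contra hne
  -- otherwise the direction `p - z` keeps us in the ball and points away from `q`
  have hout : 0 < ⟪z - q, p - z⟫ := by
    have hpc : ‖z - c‖ ≤ ‖p - c‖ := by rw [← dist_eq_norm, ← dist_eq_norm, hp]; exact hz
    have := inner_sub_pos_of_norm_le hpc (sub_left_injective.ne hne)
    rw [show p - c - (z - c) = p - z by abel, add_sub_cancel_left, inner_smul_left] at this
    exact pos_of_mul_pos_right this (by simp only [RCLike.conj_to_real]; positivity)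
  obtain ⟨ε, hgt, hε⟩ := ((hS.eventually_infDist_lt_infDist_add_smul hqS huniq hout).and
    (Ioo_mem_nhdsGT one_pos)).exists
  have hmem : z + ε • (p - z) ∈ closedBall c ρ :=
    (convex_closedBall c ρ).add_smul_sub_mem hz (mem_closedBall.2 hp.le) ⟨hε.1.le, hε.2.le⟩
  exact (hmax hmem).not_gt hgt

variable [ProperSpace F] {S : Set F} {r : ℝ}

theorem infDist_add_smul_eq_add_of_eq (hS : IsCompact S)
    (hunp : ∀ x, infDist x S < r → ∃! y, y ∈ S ∧ dist x y = infDist x S)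
    {b u : F} (hb : b ∈ S) (hu : ‖u‖ = 1) {t ρ : ℝ} (hρ : 0 < ρ) (hρt : ρ ≤ t) (hr : t + ρ < r)
    (ht : infDist (b + t • u) S = t) : infDist (b + (t + ρ) • u) S = t + ρ := by
  set c := b + t • u
  obtain ⟨z, hz, hmax⟩ := (isCompact_closedBall c ρ).exists_isMaxOn
    (nonempty_closedBall.2 hρ.le) (continuous_infDist_pt S).continuousOn
  set h := infDist z S
  have hth : t ≤ h := ht ▸ hmax (mem_closedBall_self hρ.le)
  have hht : h ≤ t + ρ := by
    have := infDist_le_infDist_add_dist (x := z) (y := c) (s := S)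
    rw [ht] at this
    linarith [mem_closedBall.1 hz]
  obtain ⟨q, ⟨hqS, hzq⟩, huniq⟩ := hunp z (by linarith)
  have hh : 0 < h := by linarith
  have hzq' : z ≠ q := by rintro rfl; rw [dist_self] at hzq; linarith
  have hz_eq := hS.eq_of_isMaxOn_infDist_closedBall hρ hz hmax hqS hzq'
    (fun y hy hy' => huniq y ⟨hy, hy'⟩)
  rw [← dist_eq_norm, hzq] at hz_eq
  change z = c + (ρ / h) • (z - q) at hz_eq
  have hcq : c - q = (1 - ρ / h) • (z - q) := by
    rw [sub_smul, one_smul]; nth_rw 1 [hz_eq]; abel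
  have hdcq : dist c q = h - ρ := by
    have : 0 ≤ 1 - ρ / h := by rw [sub_nonneg, div_le_one hh]; linarith
    rw [dist_eq_norm, hcq, norm_smul, Real.norm_of_nonneg this, ← dist_eq_norm z q, hzq,
      sub_mul, div_mul_cancel₀ _ hh.ne', one_mul]
  have hhtρ : h = t + ρ := by
    have := ht ▸ infDist_le_dist_of_mem (x := c) hqS
    linarith
  -- both `q` and `b` are then nearest points of `c`
  have hqb : q = b := by
    obtain ⟨y, -, hy⟩ := hunp c (by linarith)
    have hcb : dist c b = infDist c S := by
      rw [ht, dist_self_add_left, norm_smul, hu, mul_one, Real.norm_of_nonneg (by linarith)]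
    exact (hy q ⟨hqS, by rw [hdcq, ht]; linarith⟩).trans (hy b ⟨hb, hcb⟩).symm
  subst hqb
  have hzq_eq : z - q = h • u := by
    have hth' : t / h = 1 - ρ / h := by field_simp; linarith
    rw [← smul_right_inj (div_pos (hρ.trans_le hρt) hh).ne', smul_smul, div_mul_cancel₀ _ hh.ne',
      hth', ← hcq, add_sub_cancel_left]
  rw [← hhtρ, ← hzq_eq, add_sub_cancel]

theorem infDist_add_smul_eq_of_mem_Ico (hS : IsCompact S)
    (hunp : ∀ x, infDist x S < r → ∃! y, y ∈ S ∧ dist x y = infDist x S)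
    {b u : F} (hb : b ∈ S) (hu : ‖u‖ = 1) {δ : ℝ} (hδ : 0 < δ)
    (hδu : infDist (b + δ • u) S = δ) {t : ℝ} (ht : t ∈ Ico δ r) :
    infDist (b + t • u) S = t := by
  set s := {τ : ℝ | infDist (b + τ • u) S = τ}
  have hs : IsClosed s := isClosed_eq
    ((continuous_infDist_pt S).comp (continuous_const.add (continuous_id.smul continuous_const)))
    continuous_id
  refine (hs.inter isClosed_Icc).Icc_subset_of_forall_exists_gt hδu
    (fun τ ⟨hτ, hδτ, hτt⟩ τ' (hττ' : τ < τ') => ?_) ⟨ht.1, le_rfl⟩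
  set ρ := min (min τ (τ' - τ)) ((r - τ) / 2)
  have hρ : 0 < ρ := lt_min (lt_min (by linarith) (by linarith)) (by linarith [ht.2])
  have hρτ : ρ ≤ τ := (min_le_left _ _).trans (min_le_left _ _)
  have hρτ' : ρ ≤ τ' - τ := (min_le_left _ _).trans (min_le_right _ _)
  have hρr : ρ ≤ (r - τ) / 2 := min_le_right _ _
  exact ⟨τ + ρ, infDist_add_smul_eq_add_of_eq hS hunp hb hu hρ hρτ (by linarith [ht.2]) hτ,
    by linarith, by linarith⟩

end InnerProductSpace

theorem ball_add_smul_inter_eq_empty {E : Type*} [NormedAddCommGroup E] [NormedSpace ℝ E]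
    {S : Set E} {b u : E} (hu : ‖u‖ = 1) {δ r : ℝ} (hδr : δ < r)
    (hray : ∀ t ∈ Ico δ r, infDist (b + t • u) S = t) : ball (b + r • u) r ∩ S = ∅ := by
  refine eq_empty_of_forall_notMem fun s ⟨hs, hsS⟩ => ?_
  rw [mem_ball, dist_comm] at hs
  -- the balls `ball (b + t • u) t` miss `S` and exhaust `ball (b + r • u) r` as `t → r`
  set t := max δ ((dist (b + r • u) s + 3 * r) / 4)
  have ht : t ∈ Ico δ r := ⟨le_max_left _ _, max_lt hδr (by linarith)⟩
  have hdist : dist (b + t • u) (b + r • u) = r - t := by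
    rw [dist_add_left, dist_eq_norm, ← sub_smul, norm_smul, hu, mul_one, Real.norm_eq_abs,
      abs_sub_comm, abs_of_nonneg (by linarith [ht.2])]
  have := hray t ht ▸ infDist_le_dist_of_mem (x := b + t • u) hsS
  have := dist_triangle (b + t • u) (b + r • u) s
  linarith [le_max_right δ ((dist (b + r • u) s + 3 * r) / 4)]

theorem rConvex_iff {d : ℕ} {r : ℝ} {S : Set (EuclideanSpace ℝ (Fin d))} :
    RConvex r S ↔ ∀ x ∉ S, ∃ y, ball y r ∩ S = ∅ ∧ x ∈ ball y r := by
  have hsub : S ⊆ rHull r S := fun s hs =>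
    mem_iInter₂.2 fun y (hy : ball y r ∩ S = ∅) hsy => hy.subset ⟨hsy, hs⟩
  constructor
  · intro h x hxS
    by_contra! hno
    rw [RConvex] at h
    exact hxS (h ▸ mem_iInter₂.2 fun y hy hxy => hno y hy hxy)
  · refine fun h => (subset_antisymm (fun x hx => ?_) hsub)
    by_contra hxS
    obtain ⟨y, hy, hxy⟩ := h x hxS
    exact mem_iInter₂.1 hx y hy hxy

theorem reach_ge_implies_rConvex {d : ℕ} {S : Set (EuclideanSpace ℝ (Fin d))} {r : ℝ}
    (hS : IsCompact S) (hr : 0 < r) (hreach : ReachGe S r) :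
    RConvex r S := by
  refine rConvex_iff.2 fun x hxS => ?_
  rcases le_or_gt r (infDist x S) with hfar | hnear
  · exact ⟨x, disjoint_iff_inter_eq_empty.1 (disjoint_ball_infDist.mono_left
      (ball_subset_ball hfar)), mem_ball_self hr⟩
  obtain ⟨q, ⟨hqS, hxq⟩, -⟩ := hreach x hnear
  set δ := infDist x S
  have hδ : 0 < δ := (hS.isClosed.notMem_iff_infDist_pos ⟨q, hqS⟩).1 hxS
  set u := δ⁻¹ • (x - q)
  have hu : ‖u‖ = 1 := by
    rw [norm_smul, ← dist_eq_norm, hxq, norm_inv, Real.norm_of_nonneg hδ.le,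
      inv_mul_cancel₀ hδ.ne']
  have hx : q + δ • u = x := by
    rw [smul_smul, mul_inv_cancel₀ hδ.ne', one_smul, add_sub_cancel]
  have hray t (ht : t ∈ Ico δ r) : infDist (q + t • u) S = t :=
    infDist_add_smul_eq_of_mem_Ico hS hreach hqS hu hδ (by rw [hx]) ht
  refine ⟨q + r • u, ball_add_smul_inter_eq_empty hu hnear hray, ?_⟩
  rw [← hx, mem_ball, dist_add_left, dist_eq_norm, ← sub_smul, norm_smul, hu, mul_one,
    Real.norm_eq_abs, abs_sub_comm, abs_of_pos (sub_pos.2 hnear)]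
  linarith
end

section
/- If S ⊆ ℝ^d is a compact r-convex set for some r > 0, then S satisfies the outside r-rolling condition: for every boundary point x ∈ ∂S there exists a closed ball B of radius r such that x ∈ B and int(B) ∩ S = ∅. -/
open Metric Set

/-- Outside `r`-rolling condition: every boundary point lies in a closed ball of
radius `r` whose interior misses `S`. -/
def RollingCondition {d : ℕ} (r : ℝ) (S : Set (EuclideanSpace ℝ (Fin d))) : Prop :=
  ∀ x ∈ frontier S, ∃ y : EuclideanSpace ℝ (Fin d),
    x ∈ Metric.closedBall y r ∧ Metric.ball y r ∩ S = ∅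

/-! A ball `ball y r` misses `S` iff `y` lies outside the open `r`-thickening of `S`, so these
centres form a closed set `C`, and the complement of the `r`-hull of `S` is the open
`r`-thickening of `C`. A boundary point of an `r`-convex `S` lies in the closure of that
thickening, hence, closed balls of `ℝ^d` being compact, in a closed `r`-ball centred in `C`. -/

theorem Metric.ball_inter_eq_empty_iff_notMem_thickening {X : Type*} [PseudoMetricSpace X]
    {r : ℝ} {A : Set X} {y : X} : ball y r ∩ A = ∅ ↔ y ∉ thickening r A := by
  simp only [mem_thickening_iff, eq_empty_iff_forall_notMem, mem_inter_iff, mem_ball', not_exists,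
    not_and_or, and_comm (a := _ ∈ A)]

theorem compl_rHull {d : ℕ} (r : ℝ) (A : Set (EuclideanSpace ℝ (Fin d))) :
    (rHull r A)ᶜ = thickening r (thickening r A)ᶜ := by
  rw [rHull, thickening_eq_biUnion_ball (E := (thickening r A)ᶜ)]
  simp only [compl_iInter, compl_compl, mem_ofPred_eq, ball_inter_eq_empty_iff_notMem_thickening,
    mem_compl_iff]

theorem rConvex_implies_rolling_general {d : ℕ} {S : Set (EuclideanSpace ℝ (Fin d))} {r : ℝ}
    (hr : 0 < r) (hconv : RConvex r S) :
    RollingCondition r S := by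
  intro x hx
  have hx_closure : x ∈ closure (thickening r (thickening r S)ᶜ) := by
    rw [← compl_rHull, hconv, closure_compl]
    exact hx.2
  have hx_cthickening := closure_thickening_subset_cthickening r _ hx_closure
  rw [isOpen_thickening.isClosed_compl.cthickening_eq_biUnion_closedBall hr.le] at hx_cthickening
  obtain ⟨y, hy, hxy⟩ := mem_iUnion₂.mp hx_cthickening
  exact ⟨y, hxy, ball_inter_eq_empty_iff_notMem_thickening.mpr hy⟩

theorem rConvex_implies_rolling {d : ℕ} {S : Set (EuclideanSpace ℝ (Fin d))} {r : ℝ}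
    (hS : IsCompact S) (hr : 0 < r) (hconv : RConvex r S) :
    RollingCondition r S :=
  rConvex_implies_rolling_general hr hconv
end

section
/- If S ⊆ ℝ^d is a compact r-convex set and x ∈ ∂S, then there exists a point y ∈ ℝ^d with ‖y − x‖ ≤ r such that the open ball int B(y,r) is disjoint from S and x lies on the sphere ∂B(y,r). -/
open Metric Set

theorem rConvex_boundary_tangent_ball {d : ℕ} {S : Set (EuclideanSpace ℝ (Fin d))} {r : ℝ}
    (hS : IsCompact S) (hconv : RConvex r S) {x : EuclideanSpace ℝ (Fin d)}
    (hx : x ∈ frontier S) :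
    ∃ y : EuclideanSpace ℝ (Fin d),
      ‖y - x‖ ≤ r ∧ Metric.ball y r ∩ S = ∅ ∧ x ∈ Metric.sphere y r := by
  rcases le_or_gt r 0 with hr | hr
  · exfalso
    have hball : ∀ y : EuclideanSpace ℝ (Fin d), Metric.ball y r = ∅ := fun y =>
      Metric.ball_eq_empty.mpr hr
    have hS' : S = univ := by
      rw [← hconv]
      simp [rHull, hball]
    rw [hS'] at hx
    simp at hx
  · have hScl : IsClosed S := hS.isClosed
    have hxS : x ∈ S := hScl.closure_eq ▸ frontier_subset_closure hx
    have hxc : x ∈ closure Sᶜ := by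
      rw [closure_compl]
      exact hx.2
    -- choose points outside S converging to x
    have hz : ∀ n : ℕ, ∃ z, dist z x < 1 / (n + 1) ∧ z ∉ S := by
      intro n
      have hpos : (0 : ℝ) < 1 / (n + 1) := by positivity
      obtain ⟨z, hz1, hz2⟩ := Metric.mem_closure_iff.mp hxc _ hpos
      exact ⟨z, by rwa [dist_comm], hz1⟩
    choose z hzd hzS using hz
    -- for each n, a ball witnessing z n ∉ rHull r S
    have hy : ∀ n : ℕ, ∃ y, Metric.ball y r ∩ S = ∅ ∧ z n ∈ Metric.ball y r := by
      intro n
      have : z n ∉ rHull r S := by rw [hconv]; exact hzS n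
      simp only [rHull, mem_iInter, mem_compl_iff, mem_setOf_eq, not_forall] at this
      obtain ⟨y, hy1, hy2⟩ := this
      exact ⟨y, hy1, not_not.mp hy2⟩
    choose y hyS hyz using hy
    have hge : ∀ n, r ≤ dist x (y n) := by
      intro n
      by_contra h
      push_neg at h
      have : x ∈ Metric.ball (y n) r ∩ S := ⟨Metric.mem_ball.mpr h, hxS⟩
      rw [hyS n] at this
      exact this
    have hle : ∀ n, dist (y n) x < r + 1 / (n + 1) := by
      intro n
      calc dist (y n) x ≤ dist (y n) (z n) + dist (z n) x := dist_triangle _ _ _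
        _ < r + 1 / (n + 1) := by
            have h1 : dist (y n) (z n) < r := by
              rw [dist_comm]; exact Metric.mem_ball.mp (hyz n)
            exact add_lt_add h1 (hzd n)
    have hmem : ∀ n, y n ∈ Metric.closedBall x (r + 1) := by
      intro n
      rw [Metric.mem_closedBall, dist_comm]
      have h1 : (1 : ℝ) / (n + 1) ≤ 1 := by
        rw [div_le_one (by positivity)]
        linarith [Nat.cast_nonneg (α := ℝ) n]
      linarith [hle n, dist_comm x (y n)]
    obtain ⟨y0, -, φ, hφ, hy0⟩ :=
      (isCompact_closedBall x (r + 1)).tendsto_subseq hmem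
    have hdist : Filter.Tendsto (fun n => dist (y (φ n)) x) Filter.atTop (nhds (dist y0 x)) :=
      hy0.dist tendsto_const_nhds
    have hlim0 : Filter.Tendsto (fun n : ℕ => (1 : ℝ) / (φ n + 1)) Filter.atTop (nhds 0) :=
      tendsto_one_div_add_atTop_nhds_zero_nat.comp hφ.tendsto_atTop
    have hub : dist y0 x ≤ r := by
      have hlim : Filter.Tendsto (fun n : ℕ => r + (1 : ℝ) / (φ n + 1)) Filter.atTop
          (nhds (r + 0)) := tendsto_const_nhds.add hlim0
      rw [add_zero] at hlim
      exact le_of_tendsto_of_tendsto' hdist hlim fun n => (hle (φ n)).le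
    have hlb : r ≤ dist y0 x := by
      refine ge_of_tendsto hdist (Filter.Eventually.of_forall fun n => ?_)
      rw [dist_comm]
      exact hge (φ n)
    have heq : dist y0 x = r := le_antisymm hub hlb
    refine ⟨y0, ?_, ?_, ?_⟩
    · rw [← dist_eq_norm]
      exact hub
    · rw [eq_empty_iff_forall_notMem]
      rintro s ⟨hs1, hs2⟩
      have hge' : ∀ n, r ≤ dist s (y (φ n)) := by
        intro n
        by_contra h
        push_neg at h
        have : s ∈ Metric.ball (y (φ n)) r ∩ S := ⟨Metric.mem_ball.mpr h, hs2⟩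
        rw [hyS (φ n)] at this
        exact this
      have : r ≤ dist s y0 :=
        ge_of_tendsto (Filter.Tendsto.dist tendsto_const_nhds hy0)
          (Filter.Eventually.of_forall hge')
      exact absurd (Metric.mem_ball.mp hs1) (not_lt.mpr this)
    · rw [Metric.mem_sphere, dist_comm]
      exact heq
end

section
/- Let ν be a Borel measure on ℝ^d that is finite on compact sets, let {S_n} be a sequence of nonempty compact sets, and let S be a nonempty compact set with ν(∂S) = 0. If d_H(S_n, S) → 0 and d_H(∂S_n, ∂S) → 0, then ν(S_n Δ S) → 0. -/
/-!
A point of `Sₙ Δ S` lies within `d_H(Sₙ, S) + d_H(∂Sₙ, ∂S)` of `∂S`: a point outside a set `C` is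
at least as close to `∂C` as to `C`, because the segment to a nearest point of `C` crosses `∂C`.
When the point lies in `S \ Sₙ` this puts it near `∂Sₙ`, and then near `∂S`. So `Sₙ Δ S` is
eventually inside every thickening of the compact set `∂S`, whose measures tend to `ν(∂S) = 0`.
-/

open Metric Set MeasureTheory Filter Topology

theorem IsPreconnected.inter_frontier_nonempty {X : Type*} [TopologicalSpace X] {s t : Set X}
    (hs : IsPreconnected s) (hst : (s ∩ t).Nonempty) (hst' : (s \ t).Nonempty) :
    (s ∩ frontier t).Nonempty := by
  rw [frontier_eq_closure_inter_closure]
  refine isPreconnected_closed_iff.1 hs _ _ isClosed_closure isClosed_closure ?_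
    (hst.mono (inter_subset_inter_right _ subset_closure))
    (hst'.mono (inter_subset_inter_right _ subset_closure))
  exact fun x _ => (em (x ∈ t)).imp (fun h => subset_closure h) (fun h => subset_closure h)

theorem IsCompact.frontier {X : Type*} [TopologicalSpace X] [T2Space X] {K : Set X}
    (hK : IsCompact K) : IsCompact (frontier K) :=
  hK.of_isClosed_subset isClosed_frontier hK.isClosed.frontier_subset

theorem tendsto_measure_zero_of_eventually_subset_thickening {X ι : Type*} [MetricSpace X]
    [MeasurableSpace X] [OpensMeasurableSpace X] [ProperSpace X] {μ : Measure X}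
    [IsFiniteMeasureOnCompacts μ] {K : Set X} (hK : IsCompact K) (hμK : μ K = 0)
    {l : Filter ι} {s : ι → Set X} (hs : ∀ δ > 0, ∀ᶠ i in l, s i ⊆ thickening δ K) :
    Tendsto (fun i => μ (s i)) l (𝓝 0) := by
  have hlim : Tendsto (fun r => μ (thickening r K)) (𝓝[>] 0) (𝓝 0) :=
    hμK ▸ tendsto_measure_thickening_of_isClosed
      ⟨1, one_pos, hK.isBounded.thickening.measure_lt_top.ne⟩ hK.isClosed
  rw [ENNReal.tendsto_nhds_zero] at hlim ⊢
  intro ε hε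
  obtain ⟨δ, hδε, hδ⟩ := ((hlim ε hε).and self_mem_nhdsWithin).exists
  filter_upwards [hs δ hδ] with i hi using (measure_mono hi).trans hδε

section NormedSpace

variable {E : Type*} [NormedAddCommGroup E] [NormedSpace ℝ E]

namespace Metric

theorem infDist_frontier_le_dist_of_notMem_of_mem {C : Set E} {x y : E} (hx : x ∉ C)
    (hy : y ∈ C) : infDist x (frontier C) ≤ dist x y := by
  obtain ⟨z, hz, hzC⟩ := (convex_segment x y).isPreconnected.inter_frontier_nonempty
    ⟨y, right_mem_segment ℝ x y, hy⟩ ⟨x, left_mem_segment ℝ x y, hx⟩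
  calc infDist x (frontier C) ≤ dist x z := infDist_le_dist_of_mem hzC
    _ ≤ dist x y := by linarith [dist_add_dist_of_mem_segment hz, dist_nonneg (x := z) (y := y)]

theorem infDist_frontier_le_infDist_of_notMem {C : Set E} {x : E} (hx : x ∉ C) :
    infDist x (frontier C) ≤ infDist x C := by
  rcases C.eq_empty_or_nonempty with rfl | hC
  · simp
  · exact (le_infDist hC).2 fun y hy => infDist_frontier_le_dist_of_notMem_of_mem hx hy

end Metric

theorem IsCompact.frontier_nonempty [Nontrivial E] {K : Set E} (hK : IsCompact K)
    (hK' : K.Nonempty) : (_root_.frontier K).Nonempty :=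
  nonempty_frontier_iff.2 ⟨hK', hK.ne_univ⟩

theorem symmDiff_subset_thickening_frontier [Nontrivial E] {A S : Set E} (hA : IsCompact A)
    (hA' : A.Nonempty) (hS : IsCompact S) (hS' : S.Nonempty) {δ : ℝ}
    (hδ : hausdorffDist A S + hausdorffDist (frontier A) (frontier S) < δ) :
    symmDiff A S ⊆ thickening δ (frontier S) := by
  have hAS : hausdorffEDist A S ≠ ⊤ :=
    hausdorffEDist_ne_top_of_nonempty_of_bounded hA' hS' hA.isBounded hS.isBounded
  have hfr : hausdorffEDist (frontier A) (frontier S) ≠ ⊤ :=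
    hausdorffEDist_ne_top_of_nonempty_of_bounded (hA.frontier_nonempty hA')
      (hS.frontier_nonempty hS') hA.frontier.isBounded hS.frontier.isBounded
  have hfr_nonneg : 0 ≤ hausdorffDist (frontier A) (frontier S) := hausdorffDist_nonneg
  intro x hx
  rw [mem_thickening_iff_infDist_lt (hS.frontier_nonempty hS')]
  rcases hx with ⟨hxA, hxS⟩ | ⟨hxS, hxA⟩
  · calc infDist x (frontier S) ≤ infDist x S := infDist_frontier_le_infDist_of_notMem hxS
      _ ≤ hausdorffDist A S := infDist_le_hausdorffDist_of_mem hxA hAS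
      _ < δ := by linarith
  · calc infDist x (frontier S)
        ≤ infDist x (frontier A) + hausdorffDist (frontier A) (frontier S) :=
          infDist_le_infDist_add_hausdorffDist hfr
      _ ≤ infDist x A + hausdorffDist (frontier A) (frontier S) := by
          gcongr; exact infDist_frontier_le_infDist_of_notMem hxA
      _ ≤ hausdorffDist S A + hausdorffDist (frontier A) (frontier S) := by
          gcongr; exact infDist_le_hausdorffDist_of_mem hxS (by rwa [hausdorffEDist_comm])
      _ < δ := by rwa [hausdorffDist_comm]

end NormedSpace

theorem measure_symmDiff_tendsto_zero_of_full_convergence {d : ℕ}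
    (ν : Measure (EuclideanSpace ℝ (Fin d))) [IsFiniteMeasureOnCompacts ν]
    (Sn : ℕ → Set (EuclideanSpace ℝ (Fin d))) (S : Set (EuclideanSpace ℝ (Fin d)))
    (hSn : ∀ n, IsCompact (Sn n)) (hSn' : ∀ n, (Sn n).Nonempty)
    (hS : IsCompact S) (hS' : S.Nonempty)
    (hbd : ν (frontier S) = 0)
    (h1 : Tendsto (fun n => Metric.hausdorffDist (Sn n) S) atTop (nhds 0))
    (h2 : Tendsto (fun n => Metric.hausdorffDist (frontier (Sn n)) (frontier S)) atTop (nhds 0)) :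
    Tendsto (fun n => ν (symmDiff (Sn n) S)) atTop (nhds 0) := by
  rcases subsingleton_or_nontrivial (EuclideanSpace ℝ (Fin d)) with hE | hE
  · have hempty : ∀ n, symmDiff (Sn n) S = ∅ := fun n => by
      rw [(hSn' n).eq_univ, hS'.eq_univ, symmDiff_self, bot_eq_empty]
    simp [hempty]
  refine tendsto_measure_zero_of_eventually_subset_thickening hS.frontier hbd fun δ hδ => ?_
  filter_upwards [(h1.add h2).eventually (gt_mem_nhds (by simpa using hδ))] with n hn
  exact symmDiff_subset_thickening_frontier (hSn n) (hSn' n) hS hS' hn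
end

section
/- Let {S_n} be nonempty compact sets in ℝ^d, each satisfying the outside r-rolling condition for a fixed r > 0, and let S be a nonempty compact set with d_H(S_n, S) → 0. Then d_H(∂S_n, ∂S) → 0. -/
open Metric Set Filter

/-- A segment from a point of `A` to a point outside `A` meets the frontier of `A`,
at distance at most `dist x y` from `x`. -/
lemma seg_cross {E : Type*} [NormedAddCommGroup E] [NormedSpace ℝ E] {A : Set E} {x y : E}
    (hx : x ∈ A) (hy : y ∉ A) : ∃ z ∈ frontier A, dist z x ≤ dist x y := by
  have hseg : IsPreconnected (segment ℝ x y) := (convex_segment x y).isPreconnected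
  have hne : (segment ℝ x y ∩ frontier A).Nonempty := by
    by_contra h
    rw [not_nonempty_iff_eq_empty] at h
    have hsub : segment ℝ x y ⊆ interior A ∪ interior Aᶜ := by
      rw [← compl_frontier_eq_union_interior]
      intro z hz hzf
      exact (Set.eq_empty_iff_forall_notMem.1 h z) ⟨hz, hzf⟩
    have hdisj : Disjoint (interior A) (interior Aᶜ) :=
      (disjoint_compl_right (a := A)).mono interior_subset interior_subset
    rcases hseg.subset_or_subset isOpen_interior isOpen_interior hdisj hsub with h1 | h2
    · exact hy (interior_subset (h1 (right_mem_segment ℝ x y)))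
    · exact (interior_subset (h2 (left_mem_segment ℝ x y)) : _ ∈ Aᶜ) hx
  obtain ⟨z, hz1, hz2⟩ := hne
  refine ⟨z, hz2, ?_⟩
  have hsub : segment ℝ x y ⊆ closedBall x (dist x y) :=
    (convex_closedBall x (dist x y)).segment_subset (mem_closedBall_self dist_nonneg)
      (by simp [mem_closedBall, dist_comm])
  simpa [mem_closedBall] using hsub hz1

theorem boundary_convergence_of_rolling {d : ℕ} {r : ℝ} (hr : 0 < r)
    (Sn : ℕ → Set (EuclideanSpace ℝ (Fin d))) (S : Set (EuclideanSpace ℝ (Fin d)))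
    (hSn : ∀ n, IsCompact (Sn n)) (hSn' : ∀ n, (Sn n).Nonempty)
    (hroll : ∀ n, RollingCondition r (Sn n))
    (hS : IsCompact S) (hS' : S.Nonempty)
    (h1 : Tendsto (fun n => Metric.hausdorffDist (Sn n) S) atTop (nhds 0)) :
    Tendsto (fun n => Metric.hausdorffDist (frontier (Sn n)) (frontier S)) atTop (nhds 0) := by
  have hSb : Bornology.IsBounded S := hS.isBounded
  have hfin : ∀ n, EMetric.hausdorffEdist (Sn n) S ≠ ⊤ := fun n =>
    hausdorffEdist_ne_top_of_nonempty_of_bounded (hSn' n) hS' (hSn n).isBounded hSb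
  rw [Metric.tendsto_atTop] at h1 ⊢
  intro ε hε
  set δ : ℝ := min (ε/4) r with hδdef
  have hδpos : 0 < δ := lt_min (by linarith) hr
  have hδr : δ ≤ r := min_le_right _ _
  have hδε : δ ≤ ε/4 := min_le_left _ _
  have hε₀ : (0:ℝ) < ε/6 := by linarith
  -- Direction 1 : points of frontier (Sn n) are close to frontier S (uses rolling).
  have key1 : ∀ n, Metric.hausdorffDist (Sn n) S < min (δ/2) (ε/8) →
      ∀ y ∈ frontier (Sn n), ∃ z ∈ frontier S, dist y z ≤ ε/2 := by
    intro n hn y hy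
    obtain ⟨c, hyc, hcS⟩ := hroll n y hy
    have hySn : y ∈ Sn n := by
      have := frontier_subset_closure (s := Sn n) hy
      rwa [(hSn n).isClosed.closure_eq] at this
    have hyc' : dist y c = r := by
      refine le_antisymm (mem_closedBall.mp hyc) ?_
      by_contra h
      push_neg at h
      exact (Set.eq_empty_iff_forall_notMem.1 hcS y) ⟨mem_ball.mpr h, hySn⟩
    set q := y + (δ/r) • (c - y) with hq
    have hcy : ‖c - y‖ = r := by
      rw [← dist_eq_norm, dist_comm]; exact hyc'
    have hqy : dist q y = δ := by
      rw [dist_eq_norm]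
      have : q - y = (δ/r) • (c - y) := by rw [hq]; module
      rw [this, norm_smul, hcy, Real.norm_eq_abs, abs_of_nonneg (by positivity)]
      field_simp
    have hqc : dist q c = r - δ := by
      rw [dist_eq_norm]
      have : q - c = (1 - δ/r) • (y - c) := by rw [hq]; module
      rw [this, norm_smul, Real.norm_eq_abs, ← dist_eq_norm, hyc',
        abs_of_nonneg (by rw [sub_nonneg]; exact div_le_one_of_le₀ hδr hr.le)]
      field_simp
    have hqSn : ∀ w ∈ Sn n, δ ≤ dist q w := by
      intro w hw
      have hcw : r ≤ dist c w := by
        by_contra h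
        push_neg at h
        exact (Set.eq_empty_iff_forall_notMem.1 hcS w) ⟨mem_ball'.mpr h, hw⟩
      have := dist_triangle c q w
      rw [dist_comm c q, hqc] at this
      linarith
    have hqS : δ - Metric.hausdorffDist (Sn n) S ≤ infDist q S := by
      have h2 : infDist q (Sn n) ≤ infDist q S + Metric.hausdorffDist S (Sn n) :=
        infDist_le_infDist_add_hausdorffDist (by rw [EMetric.hausdorffEdist_comm]; exact hfin n)
      have h3 : δ ≤ infDist q (Sn n) := by
        obtain ⟨w, hw, hwd⟩ := (hSn n).exists_infDist_eq_dist (hSn' n) q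
        rw [hwd]; exact hqSn w hw
      rw [Metric.hausdorffDist_comm] at h2
      linarith
    have hqnS : q ∉ S := by
      intro h
      have := infDist_zero_of_mem h
      have hn' : Metric.hausdorffDist (Sn n) S < δ/2 := lt_of_lt_of_le hn (min_le_left _ _)
      rw [this] at hqS
      linarith
    obtain ⟨s, hsS, hsd⟩ := hS.exists_infDist_eq_dist hS' y
    have hys : dist y s ≤ Metric.hausdorffDist (Sn n) S := by
      rw [← hsd]; exact infDist_le_hausdorffDist_of_mem hySn (hfin n)
    obtain ⟨z, hzF, hzd⟩ := seg_cross hsS hqnS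
    refine ⟨z, hzF, ?_⟩
    have t1 := dist_triangle y s z
    have t2 := dist_triangle s y q
    have hn1 : Metric.hausdorffDist (Sn n) S < δ/2 := lt_of_lt_of_le hn (min_le_left _ _)
    have hn2 : Metric.hausdorffDist (Sn n) S < ε/8 := lt_of_lt_of_le hn (min_le_right _ _)
    have hzd' : dist s z ≤ dist s q := by rwa [dist_comm z s] at hzd
    have hsy : dist s y ≤ Metric.hausdorffDist (Sn n) S := by rwa [dist_comm s y]
    have hyq : dist y q = δ := by rw [dist_comm]; exact hqy
    linarith
  -- Direction 2 : points of frontier S are close to frontier (Sn n).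
  have key2 : ∃ κ > (0:ℝ), ∀ n, Metric.hausdorffDist (Sn n) S < κ →
      ∀ x ∈ frontier S, ∃ w ∈ frontier (Sn n), dist x w ≤ ε/2 := by
    by_cases hF : frontier S = ∅
    · exact ⟨1, one_pos, fun n _ x hx => absurd (hF ▸ hx) (Set.notMem_empty x)⟩
    · have hFne : (frontier S).Nonempty := Set.nonempty_iff_ne_empty.2 hF
      have hFc : IsCompact (frontier S) := hS.of_isClosed_subset isClosed_frontier
        (frontier_subset_closure.trans hS.isClosed.closure_eq.subset)
      have hcov : frontier S ⊆ ⋃ z : {z : EuclideanSpace ℝ (Fin d) // z ∉ S}, ball (z : _) (ε/6) := by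
        intro x hx
        have hx' : x ∈ closure Sᶜ := by
          rw [← frontier_compl] at hx
          exact frontier_subset_closure hx
        obtain ⟨z, hz1, hz2⟩ := Metric.mem_closure_iff.1 hx' (ε/6) hε₀
        exact mem_iUnion.2 ⟨⟨z, hz1⟩, mem_ball.2 hz2⟩
      obtain ⟨t, ht⟩ := hFc.elim_finite_subcover _ (fun z => isOpen_ball) hcov
      have htne : t.Nonempty := by
        obtain ⟨x0, hx0⟩ := hFne
        obtain ⟨i, hi, _⟩ := Set.mem_iUnion₂.1 (ht hx0)
        exact ⟨i, hi⟩
      set η := t.inf' htne (fun z => infDist (z : EuclideanSpace ℝ (Fin d)) S) with hηdef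
      have hηpos : 0 < η := by
        rw [hηdef, Finset.lt_inf'_iff]
        intro i hi
        exact (hS.isClosed.notMem_iff_infDist_pos hS').1 i.2
      refine ⟨min η (ε/6), lt_min hηpos hε₀, fun n hn x hx => ?_⟩
      have hn1 : Metric.hausdorffDist (Sn n) S < η := lt_of_lt_of_le hn (min_le_left _ _)
      have hn2 : Metric.hausdorffDist (Sn n) S < ε/6 := lt_of_lt_of_le hn (min_le_right _ _)
      have hxS : x ∈ S := by
        have := frontier_subset_closure (s := S) hx
        rwa [hS.isClosed.closure_eq] at this
      obtain ⟨s, hsSn, hsd⟩ := (hSn n).exists_infDist_eq_dist (hSn' n) x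
      have hxs : dist x s < ε/6 := by
        rw [← hsd]
        calc infDist x (Sn n) ≤ Metric.hausdorffDist S (Sn n) :=
              infDist_le_hausdorffDist_of_mem hxS (by rw [EMetric.hausdorffEdist_comm]; exact hfin n)
          _ = Metric.hausdorffDist (Sn n) S := Metric.hausdorffDist_comm
          _ < ε/6 := hn2
      obtain ⟨i, hit, hxi⟩ := Set.mem_iUnion₂.1 (ht hx)
      have hxi' : dist x (i : EuclideanSpace ℝ (Fin d)) < ε/6 := mem_ball.1 hxi
      have hziSn : (i : EuclideanSpace ℝ (Fin d)) ∉ Sn n := by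
        intro h
        have h1 : infDist (i : EuclideanSpace ℝ (Fin d)) S ≤ Metric.hausdorffDist (Sn n) S :=
          infDist_le_hausdorffDist_of_mem h (hfin n)
        have h2 : η ≤ infDist (i : EuclideanSpace ℝ (Fin d)) S := Finset.inf'_le _ hit
        linarith
      obtain ⟨w, hwF, hwd⟩ := seg_cross hsSn hziSn
      refine ⟨w, hwF, ?_⟩
      have t1 := dist_triangle x s w
      have t2 := dist_triangle s x (i : EuclideanSpace ℝ (Fin d))
      have hwd' : dist s w ≤ dist s (i : EuclideanSpace ℝ (Fin d)) := by rwa [dist_comm w s] at hwd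
      have hsx : dist s x = dist x s := dist_comm _ _
      linarith
  obtain ⟨κ, hκ, hkey2⟩ := key2
  obtain ⟨N, hN⟩ := h1 (min κ (min (δ/2) (ε/8)))
    (lt_min hκ (lt_min (by linarith) (by linarith)))
  refine ⟨N, fun n hn => ?_⟩
  have hd := hN n hn
  rw [Real.dist_eq, sub_zero, abs_of_nonneg hausdorffDist_nonneg] at hd
  have hdκ : Metric.hausdorffDist (Sn n) S < κ := lt_of_lt_of_le hd (min_le_left _ _)
  have hdδ : Metric.hausdorffDist (Sn n) S < min (δ/2) (ε/8) :=
    lt_of_lt_of_le hd (min_le_right _ _)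
  have hle : Metric.hausdorffDist (frontier (Sn n)) (frontier S) ≤ ε/2 :=
    hausdorffDist_le_of_mem_dist (by linarith)
      (fun y hy => key1 n hdδ y hy)
      (fun x hx => by
        obtain ⟨w, hw1, hw2⟩ := hkey2 n hdκ x hx
        exact ⟨w, hw1, hw2⟩)
  rw [Real.dist_eq, sub_zero, abs_of_nonneg hausdorffDist_nonneg]
  linarith
end

section
/- Let S be a nonempty compact subset of ℝ^d, ε > 0, and S_n a nonempty compact set such that S ⊆ B(S_n, ε) and d_H(∂S_n, ∂S) < ε. Then every point x ∈ S with dist(x, ∂S) > 2ε belongs to S_n. -/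
/-!
If `x ∈ S` lies outside `Sn`, then, since `x` is within `ε` of `Sn`, some boundary point `y` of `Sn`
is within `ε` of `x`. The Hausdorff bound puts `y` within `ε` of `∂S`, so `dist(x, ∂S) < 2ε`.
-/

open Metric Set

theorem Metric.infDist_le_of_mem_cthickening {α : Type*} [PseudoMetricSpace α] {s : Set α} {x : α}
    {δ : ℝ} (hδ : 0 ≤ δ) (hx : x ∈ cthickening δ s) : infDist x s ≤ δ :=
  ENNReal.toReal_le_of_le_ofReal hδ (mem_cthickening_iff.mp hx)

theorem Metric.exists_mem_frontier_dist_le_of_mem_cthickening {E : Type*} [NormedAddCommGroup E]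
    [NormedSpace ℝ E] [FiniteDimensional ℝ E] {s : Set E} {x : E} {δ : ℝ} (hδ : 0 ≤ δ)
    (hx : x ∈ cthickening δ s) (hxs : x ∉ s) : ∃ y ∈ frontier s, dist x y ≤ δ := by
  have hs : s.Nonempty := nonempty_iff_ne_empty.2 fun h ↦ by simp [h] at hx
  obtain ⟨y, hy, hxy⟩ := exists_mem_frontier_infDist_compl_eq_dist (s := sᶜ) hxs
    (compl_ne_univ.2 hs)
  rw [frontier_compl] at hy
  rw [compl_compl] at hxy
  exact ⟨y, hy, hxy ▸ infDist_le_of_mem_cthickening hδ hx⟩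

theorem deep_points_belong_to_estimator_general {d : ℕ}
    {S Sn : Set (EuclideanSpace ℝ (Fin d))} {ε : ℝ}
    (hSn : IsCompact Sn)
    (hsub : S ⊆ Metric.cthickening ε Sn)
    (hbd : Metric.hausdorffDist (frontier Sn) (frontier S) < ε) :
    ∀ x ∈ S, 2 * ε < Metric.infDist x (frontier S) → x ∈ Sn := by
  intro x hxS hdeep
  by_contra hx
  have hε : 0 < ε := hausdorffDist_nonneg.trans_lt hbd
  obtain ⟨y, hy, hxy⟩ := exists_mem_frontier_dist_le_of_mem_cthickening hε.le (hsub hxS) hx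
  have hS : Bornology.IsBounded S := hSn.isBounded.cthickening.subset hsub
  have hfS : (frontier S).Nonempty :=
    nonempty_iff_ne_empty.2 fun h ↦ by rw [h, infDist_empty] at hdeep; linarith
  have hfin : hausdorffEDist (frontier Sn) (frontier S) ≠ ⊤ :=
    hausdorffEDist_ne_top_of_nonempty_of_bounded ⟨y, hy⟩ hfS
      (hSn.isBounded.closure.subset frontier_subset_closure)
      (hS.closure.subset frontier_subset_closure)
  refine hdeep.not_ge ?_
  calc
    infDist x (frontier S) ≤ infDist y (frontier S) + dist x y := infDist_le_infDist_add_dist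
    _ ≤ hausdorffDist (frontier Sn) (frontier S) + ε :=
      add_le_add (infDist_le_hausdorffDist_of_mem hy hfin) hxy
    _ ≤ 2 * ε := by linarith

theorem deep_points_belong_to_estimator {d : ℕ}
    {S Sn : Set (EuclideanSpace ℝ (Fin d))} {ε : ℝ} (hε : 0 < ε)
    (hS : IsCompact S) (hS' : S.Nonempty)
    (hSn : IsCompact Sn) (hSn' : Sn.Nonempty)
    (hsub : S ⊆ Metric.cthickening ε Sn)
    (hbd : Metric.hausdorffDist (frontier Sn) (frontier S) < ε) :
    ∀ x ∈ S, 2 * ε < Metric.infDist x (frontier S) → x ∈ Sn :=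
  deep_points_belong_to_estimator_general hSn hsub hbd
end

section
/- Let {S_n} and S be nonempty compact sets in ℝ^d with d_H(S_n, S) → 0 and d_H(∂S_n, ∂S) → 0. Then for every ε > 0 and all sufficiently large n, the symmetric difference S_n Δ S is contained in the set {x ∈ S : dist(x, ∂S) ≤ 3ε} ∪ {x ∈ S_n : dist(x, ∂S_n) ≤ 2ε}, and in particular S_n Δ S ⊆ B(∂S, 3ε) for large n. -/
open Metric Set Filter

/-- If `x ∉ t` and `y ∈ t`, the segment from `x` to `y` crosses the frontier of `t`,
at a point no farther from `x` than `y` is. -/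
lemma exists_frontier_dist_le {E : Type*} [NormedAddCommGroup E] [NormedSpace ℝ E]
    {t : Set E} {x y : E} (hx : x ∉ t) (hy : y ∈ t) :
    ∃ z ∈ frontier t, dist x z ≤ dist x y := by
  have hseg : IsPreconnected (segment ℝ x y) := (convex_segment x y).isPreconnected
  have key : (segment ℝ x y ∩ frontier t).Nonempty := by
    by_contra h
    rw [not_nonempty_iff_eq_empty] at h
    have hnf : ∀ z ∈ segment ℝ x y, z ∉ frontier t := fun z hz hzf =>
      (eq_empty_iff_forall_notMem.mp h z) ⟨hz, hzf⟩
    have hsub : segment ℝ x y ⊆ interior t ∪ interior tᶜ := by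
      intro z hz
      by_cases hzt : z ∈ t
      · exact Or.inl ((self_diff_frontier t) ▸ ⟨hzt, hnf z hz⟩)
      · refine Or.inr ?_
        have : z ∈ tᶜ \ frontier tᶜ := ⟨hzt, by rw [frontier_compl]; exact hnf z hz⟩
        rwa [self_diff_frontier] at this
    have hyi : y ∈ interior t :=
      (self_diff_frontier t) ▸ ⟨hy, hnf y (right_mem_segment ℝ x y)⟩
    have hxi : x ∈ interior tᶜ := by
      have : x ∈ tᶜ \ frontier tᶜ :=
        ⟨hx, by rw [frontier_compl]; exact hnf x (left_mem_segment ℝ x y)⟩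
      rwa [self_diff_frontier] at this
    obtain ⟨z, _, hz1, hz2⟩ := hseg (interior t) (interior tᶜ) isOpen_interior isOpen_interior
      hsub ⟨y, right_mem_segment ℝ x y, hyi⟩ ⟨x, left_mem_segment ℝ x y, hxi⟩
    exact (interior_subset hz2) (interior_subset hz1)
  obtain ⟨z, hzseg, hzf⟩ := key
  refine ⟨z, hzf, ?_⟩
  have h1 := dist_add_dist_of_mem_segment hzseg
  have h2 : (0 : ℝ) ≤ dist z y := dist_nonneg
  linarith

theorem symmDiff_near_boundary_of_full_convergence {d : ℕ}
    (Sn : ℕ → Set (EuclideanSpace ℝ (Fin d))) (S : Set (EuclideanSpace ℝ (Fin d)))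
    (hSn : ∀ n, IsCompact (Sn n)) (hSn' : ∀ n, (Sn n).Nonempty)
    (hS : IsCompact S) (hS' : S.Nonempty)
    (h1 : Tendsto (fun n => Metric.hausdorffDist (Sn n) S) atTop (nhds 0))
    (h2 : Tendsto (fun n => Metric.hausdorffDist (frontier (Sn n)) (frontier S)) atTop (nhds 0)) :
    ∀ ε > (0 : ℝ), ∀ᶠ n in atTop,
      symmDiff (Sn n) S ⊆
        ({x ∈ S | Metric.infDist x (frontier S) ≤ 3 * ε} ∪
          {x ∈ Sn n | Metric.infDist x (frontier (Sn n)) ≤ 2 * ε}) ∧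
      symmDiff (Sn n) S ⊆ Metric.cthickening (3 * ε) (frontier S) := by
  intro ε hε
  have e1 : ∀ᶠ n in atTop, Metric.hausdorffDist (Sn n) S < ε := h1.eventually_lt_const hε
  have e2 : ∀ᶠ n in atTop, Metric.hausdorffDist (frontier (Sn n)) (frontier S) < ε :=
    h2.eventually_lt_const hε
  filter_upwards [e1, e2] with n hn1 hn2
  have hfin : EMetric.hausdorffEdist (Sn n) S ≠ ⊤ :=
    Metric.hausdorffEdist_ne_top_of_nonempty_of_bounded (hSn' n) hS' (hSn n).isBounded
      hS.isBounded
  have hfS : IsCompact (frontier S) :=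
    hS.of_isClosed_subset isClosed_frontier hS.isClosed.frontier_subset
  have hfSnb : Bornology.IsBounded (frontier (Sn n)) :=
    (hSn n).isBounded.subset (hSn n).isClosed.frontier_subset
  by_cases hfe : frontier S = ∅
  · -- degenerate case: `S` is the whole (necessarily subsingleton) space
    have hSuniv : S = univ := by
      rcases frontier_eq_empty_iff.mp hfe with h | h
      · exact absurd h (Nonempty.ne_empty hS')
      · exact h
    haveI : CompactSpace (EuclideanSpace ℝ (Fin d)) :=
      isCompact_univ_iff.mp (hSuniv ▸ hS)
    haveI hsub : Subsingleton (EuclideanSpace ℝ (Fin d)) := by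
      by_contra hns
      haveI : Nontrivial (EuclideanSpace ℝ (Fin d)) :=
        not_subsingleton_iff_nontrivial.mp hns
      exact NoncompactSpace.noncompact_univ (hSuniv ▸ hS)
    have hSnuniv : Sn n = univ := by
      obtain ⟨a, ha⟩ := hSn' n
      exact eq_univ_of_forall fun x => (Subsingleton.elim x a) ▸ ha
    have hsd : symmDiff (Sn n) S = ∅ := by
      rw [hSnuniv, hSuniv, symmDiff_self]
      rfl
    rw [hsd]
    exact ⟨empty_subset _, empty_subset _⟩
  · have hfS' : (frontier S).Nonempty := nonempty_iff_ne_empty.mpr hfe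
    -- Case A: points of `S \ Sn n`
    have caseA : ∀ x ∈ S \ Sn n,
        Metric.infDist x (frontier S) ≤ 3 * ε ∧
          x ∈ Metric.cthickening (3 * ε) (frontier S) := by
      rintro x ⟨hxS, hxSn⟩
      obtain ⟨y, hy, hyd⟩ := (hSn n).exists_infDist_eq_dist (hSn' n) x
      have hdy : dist x y ≤ ε := by
        have h := Metric.infDist_le_hausdorffDist_of_mem hxS
          (by rw [EMetric.hausdorffEdist_comm]; exact hfin)
        rw [Metric.hausdorffDist_comm] at h
        rw [← hyd]
        linarith
      obtain ⟨z, hz, hzd⟩ := exists_frontier_dist_le hxSn hy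
      have hffin : EMetric.hausdorffEdist (frontier (Sn n)) (frontier S) ≠ ⊤ :=
        Metric.hausdorffEdist_ne_top_of_nonempty_of_bounded ⟨z, hz⟩ hfS' hfSnb
          (hfS.isBounded)
      have hzS : Metric.infDist z (frontier S) ≤ ε := by
        have := Metric.infDist_le_hausdorffDist_of_mem hz hffin
        linarith
      obtain ⟨w, hw, hwd⟩ := hfS.exists_infDist_eq_dist hfS' z
      have hxw : dist x w ≤ 2 * ε := by
        have := dist_triangle x z w
        rw [← hwd] at *
        linarith
      constructor
      · have : Metric.infDist x (frontier S) ≤ dist x w :=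
          Metric.infDist_le_dist_of_mem hw
        linarith
      · exact Metric.mem_cthickening_of_dist_le x w (3 * ε) _ hw (by linarith)
    -- Case B: points of `Sn n \ S`
    have caseB : ∀ x ∈ Sn n \ S,
        Metric.infDist x (frontier (Sn n)) ≤ 2 * ε ∧
          x ∈ Metric.cthickening (3 * ε) (frontier S) := by
      rintro x ⟨hxSn, hxS⟩
      obtain ⟨y, hy, hyd⟩ := hS.exists_infDist_eq_dist hS' x
      have hdy : dist x y ≤ ε := by
        have h := Metric.infDist_le_hausdorffDist_of_mem hxSn hfin
        rw [← hyd]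
        linarith
      obtain ⟨z, hz, hzd⟩ := exists_frontier_dist_le hxS hy
      refine ⟨?_, Metric.mem_cthickening_of_dist_le x z (3 * ε) _ hz (by linarith)⟩
      by_cases hfn : frontier (Sn n) = ∅
      · rw [hfn, Metric.infDist_empty]
        positivity
      · have hfSn' : (frontier (Sn n)).Nonempty := nonempty_iff_ne_empty.mpr hfn
        have hffin : EMetric.hausdorffEdist (frontier S) (frontier (Sn n)) ≠ ⊤ :=
          Metric.hausdorffEdist_ne_top_of_nonempty_of_bounded hfS' hfSn' hfS.isBounded hfSnb
        have hzSn : Metric.infDist z (frontier (Sn n)) ≤ ε := by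
          have h := Metric.infDist_le_hausdorffDist_of_mem hz hffin
          rw [Metric.hausdorffDist_comm] at h
          linarith
        have := Metric.infDist_le_infDist_add_dist (x := x) (y := z) (s := frontier (Sn n))
        linarith
    constructor
    · intro x hx
      rcases Set.mem_symmDiff.mp hx with ⟨hxSn, hxS⟩ | ⟨hxS, hxSn⟩
      · exact Or.inr ⟨hxSn, (caseB x ⟨hxSn, hxS⟩).1⟩
      · exact Or.inl ⟨hxS, (caseA x ⟨hxS, hxSn⟩).1⟩
    · intro x hx
      rcases Set.mem_symmDiff.mp hx with ⟨hxSn, hxS⟩ | ⟨hxS, hxSn⟩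
      · exact (caseB x ⟨hxSn, hxS⟩).2
      · exact (caseA x ⟨hxS, hxSn⟩).2
end

section
/- Let S ⊆ ℝ^d be a compact r-convex set and let {S_n} be nonempty compact subsets of S with d_H(S_n, S) → 0, where each S_n is r-convex (e.g., S_n = C_r of a finite subset of S). Then d_H(∂S_n, ∂S) → 0. -/
open Metric Set Filter

/-- A preconnected set meeting both `s` and `sᶜ` meets `frontier s`. -/
lemma aux_preconnected_frontier {α : Type*} [TopologicalSpace α] {t s : Set α}
    (ht : IsPreconnected t) (h1 : (t ∩ s).Nonempty) (h2 : (t ∩ sᶜ).Nonempty) :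
    (t ∩ frontier s).Nonempty := by
  by_contra hfr
  rw [Set.not_nonempty_iff_eq_empty] at hfr
  have hsub : t ⊆ interior s ∪ (closure s)ᶜ := by
    intro x hx
    have hxf : x ∉ frontier s := fun hf => (Set.eq_empty_iff_forall_notMem.mp hfr x) ⟨hx, hf⟩
    by_cases hc : x ∈ closure s
    · left
      by_contra hi
      exact hxf ⟨hc, hi⟩
    · right; exact hc
  have hu1 : (t ∩ interior s).Nonempty := by
    obtain ⟨x, hxt, hxs⟩ := h1
    refine ⟨x, hxt, ?_⟩
    rcases hsub hxt with h | h
    · exact h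
    · exact absurd (subset_closure hxs) h
  have hu2 : (t ∩ (closure s)ᶜ).Nonempty := by
    obtain ⟨x, hxt, hxs⟩ := h2
    refine ⟨x, hxt, ?_⟩
    rcases hsub hxt with h | h
    · exact absurd (interior_subset h) hxs
    · exact h
  obtain ⟨x, -, hxi, hxc⟩ := ht (interior s) (closure s)ᶜ isOpen_interior
    isClosed_closure.isOpen_compl hsub hu1 hu2
  exact hxc (subset_closure (interior_subset hxi))

/-- From `RConvex`: near any frontier point there is an `r`-ball missing `T`. -/
lemma aux_rolling {d : ℕ} {r : ℝ} {T : Set (EuclideanSpace ℝ (Fin d))}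
    (hT : RConvex r T) {x : EuclideanSpace ℝ (Fin d)} (hx : x ∈ frontier T)
    {δ : ℝ} (hδ : 0 < δ) :
    ∃ y, dist x y < r + δ ∧ Metric.ball y r ∩ T = ∅ := by
  have hxc : x ∈ closure Tᶜ := by
    rw [closure_compl]
    exact fun hi => hx.2 hi
  obtain ⟨w, hwT, hw⟩ := Metric.mem_closure_iff.mp hxc δ hδ
  have hwR : w ∉ rHull r T := by rw [hT]; exact hwT
  simp only [rHull, Set.mem_iInter, Set.mem_setOf_eq, Set.mem_compl_iff, not_forall] at hwR
  obtain ⟨y, hyball, hwy⟩ := hwR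
  rw [not_not] at hwy
  refine ⟨y, ?_, hyball⟩
  calc dist x y ≤ dist x w + dist w y := dist_triangle x w y
    _ < δ + r := add_lt_add_of_lt_of_lt hw (Metric.mem_ball.mp hwy)
    _ = r + δ := add_comm δ r

theorem boundary_convergence_of_rConvex_estimators {d : ℕ} {r : ℝ} (hr : 0 < r)
    {S : Set (EuclideanSpace ℝ (Fin d))} (hS : IsCompact S) (hSconv : RConvex r S)
    (Sn : ℕ → Set (EuclideanSpace ℝ (Fin d)))
    (hSn : ∀ n, IsCompact (Sn n)) (hSn' : ∀ n, (Sn n).Nonempty)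
    (hSnS : ∀ n, Sn n ⊆ S) (hSnconv : ∀ n, RConvex r (Sn n))
    (h1 : Tendsto (fun n => Metric.hausdorffDist (Sn n) S) atTop (nhds 0)) :
    Tendsto (fun n => Metric.hausdorffDist (frontier (Sn n)) (frontier S)) atTop (nhds 0) := by
  have hSne : S.Nonempty := (hSn' 0).mono (hSnS 0)
  rcases subsingleton_or_nontrivial (EuclideanSpace ℝ (Fin d)) with hsub | hnt
  · -- degenerate case: subsingleton space, everything is `univ`
    have huniv : ∀ T : Set (EuclideanSpace ℝ (Fin d)), T.Nonempty → T = univ := by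
      intro T ⟨y, hy⟩
      ext z
      simp only [Set.mem_univ, iff_true]
      rwa [Subsingleton.elim z y]
    have : (fun n => Metric.hausdorffDist (frontier (Sn n)) (frontier S)) = fun _ => 0 := by
      funext n
      rw [huniv _ (hSn' n), huniv _ hSne, frontier_univ, Metric.hausdorffDist_empty]
    rw [this]
    exact tendsto_const_nhds
  · -- main case
    have hne_top : ∀ n, EMetric.hausdorffEdist (S : Set (EuclideanSpace ℝ (Fin d))) (Sn n) ≠ ⊤ :=
      fun n => Metric.hausdorffEdist_ne_top_of_nonempty_of_bounded hSne (hSn' n)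
        hS.isBounded (hSn n).isBounded
    have hFS : (frontier S).Nonempty := by
      rw [nonempty_frontier_iff]
      exact ⟨hSne, hS.ne_univ⟩
    have hFSn : ∀ n, (frontier (Sn n)).Nonempty := by
      intro n
      rw [nonempty_frontier_iff]
      exact ⟨hSn' n, (hSn n).ne_univ⟩
    rw [Metric.tendsto_atTop] at h1 ⊢
    intro ε hε
    set η : ℝ := min (ε / 4) (r / 2) with hηdef
    have hη : 0 < η := lt_min (by linarith) (by linarith)
    have hηr : η ≤ r / 2 := min_le_right _ _
    have hηε : η ≤ ε / 4 := min_le_left _ _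
    obtain ⟨N, hN⟩ := h1 η hη
    refine ⟨N, fun n hn => ?_⟩
    have hdist : Metric.hausdorffDist (Sn n) S < η := by
      have := hN n hn
      rwa [Real.dist_eq, sub_zero, abs_of_nonneg Metric.hausdorffDist_nonneg] at this
    have hdist' : Metric.hausdorffDist S (Sn n) < η := by
      rwa [Metric.hausdorffDist_comm] at hdist
    have key : Metric.hausdorffDist (frontier (Sn n)) (frontier S) ≤ 3 * η := by
      apply Metric.hausdorffDist_le_of_mem_dist (by positivity)
      · -- direction 1: frontier Sn → frontier S
        intro x hx
        have hxSn : x ∈ Sn n := (hSn n).isClosed.frontier_subset hx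
        have hxS : x ∈ S := hSnS n hxSn
        obtain ⟨y, hxy, hball⟩ := aux_rolling (hSnconv n) hx hη
        -- ball y (r - η) misses S
        have hballS : ∀ z ∈ S, ¬ dist z y < r - η := by
          intro z hzS hzy
          have h1' : Metric.infDist z (Sn n) ≤ Metric.hausdorffDist S (Sn n) :=
            Metric.infDist_le_hausdorffDist_of_mem hzS (hne_top n)
          have h2' : Metric.infDist z (Sn n) < r - dist z y := by
            have : η < r - dist z y := by linarith
            linarith
          obtain ⟨w, hwSn, hwz⟩ := (Metric.infDist_lt_iff (hSn' n)).mp h2'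
          have : w ∈ Metric.ball y r ∩ Sn n := by
            refine ⟨Metric.mem_ball.mpr ?_, hwSn⟩
            calc dist w y ≤ dist w z + dist z y := dist_triangle w z y
              _ = dist z w + dist z y := by rw [dist_comm w z]
              _ < (r - dist z y) + dist z y := by linarith
              _ = r := by ring
          rw [hball] at this
          exact this
        have hxr : r ≤ dist x y := by
          by_contra h
          push_neg at h
          have : x ∈ Metric.ball y r ∩ Sn n := ⟨Metric.mem_ball.mpr h, hxSn⟩
          rw [hball] at this
          exact this
        have hxy0 : 0 < dist x y := lt_of_lt_of_le hr hxr
        -- the point z on the segment from y to x at distance r - 2η from y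
        set c : ℝ := (r - 2 * η) / dist x y with hc
        have hc0 : 0 ≤ c := div_nonneg (by linarith) hxy0.le
        have hc1 : c ≤ 1 := by
          rw [div_le_one hxy0]
          linarith
        set z : EuclideanSpace ℝ (Fin d) := y + c • (x - y) with hz
        have hzy : dist z y = r - 2 * η := by
          rw [dist_eq_norm]
          have : z - y = c • (x - y) := by rw [hz]; abel
          rw [this, norm_smul, Real.norm_eq_abs, abs_of_nonneg hc0, ← dist_eq_norm, hc,
            div_mul_cancel₀ _ hxy0.ne']
        have hxz : dist x z = dist x y - (r - 2 * η) := by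
          rw [dist_eq_norm]
          have : x - z = (1 - c) • (x - y) := by
            rw [hz, sub_smul, one_smul]
            abel
          rw [this, norm_smul, Real.norm_eq_abs, abs_of_nonneg (by linarith : (0:ℝ) ≤ 1 - c),
            ← dist_eq_norm, hc]
          field_simp
        have hxz3 : dist x z < 3 * η := by
          rw [hxz]
          linarith
        have hzS : z ∉ S := by
          intro hzmem
          exact hballS z hzmem (by rw [hzy]; linarith)
        -- segment from x to z meets frontier S
        obtain ⟨q, hqseg, hqfr⟩ := aux_preconnected_frontier
          (convex_segment x z).isPreconnected ⟨x, left_mem_segment ℝ x z, hxS⟩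
          ⟨z, right_mem_segment ℝ x z, hzS⟩
        refine ⟨q, hqfr, ?_⟩
        have hqball : q ∈ Metric.closedBall x (dist x z) :=
          (convex_closedBall x (dist x z)).segment_subset
            (Metric.mem_closedBall_self dist_nonneg)
            (Metric.mem_closedBall.mpr (by rw [dist_comm])) hqseg
        have := Metric.mem_closedBall.mp hqball
        calc dist x q = dist q x := dist_comm x q
          _ ≤ dist x z := this
          _ ≤ 3 * η := hxz3.le
      · -- direction 2: frontier S → frontier Sn
        intro x hx
        have hxS : x ∈ S := hS.isClosed.frontier_subset hx
        have hxc : x ∈ closure Sᶜ := by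
          rw [closure_compl]
          exact fun hi => hx.2 hi
        obtain ⟨w, hwS, hw⟩ := Metric.mem_closure_iff.mp hxc η hη
        have hwSn : w ∉ Sn n := fun h => hwS (hSnS n h)
        have hinf : Metric.infDist x (Sn n) < η :=
          lt_of_le_of_lt (Metric.infDist_le_hausdorffDist_of_mem hxS (hne_top n)) hdist'
        obtain ⟨p, hpSn, hpx⟩ := (Metric.infDist_lt_iff (hSn' n)).mp hinf
        obtain ⟨q, hqseg, hqfr⟩ := aux_preconnected_frontier
          (convex_segment p w).isPreconnected ⟨p, left_mem_segment ℝ p w, hpSn⟩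
          ⟨w, right_mem_segment ℝ p w, hwSn⟩
        refine ⟨q, hqfr, ?_⟩
        have hqball : q ∈ Metric.closedBall x η :=
          (convex_closedBall x η).segment_subset
            (Metric.mem_closedBall.mpr (by rw [dist_comm]; exact hpx.le))
            (Metric.mem_closedBall.mpr (by rw [dist_comm]; exact hw.le)) hqseg
        have := Metric.mem_closedBall.mp hqball
        calc dist x q = dist q x := dist_comm x q
          _ ≤ η := this
          _ ≤ 3 * η := by linarith
    rw [Real.dist_eq, sub_zero, abs_of_nonneg Metric.hausdorffDist_nonneg]
    calc Metric.hausdorffDist (frontier (Sn n)) (frontier S) ≤ 3 * η := key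
      _ ≤ 3 * (ε / 4) := by linarith
      _ < ε := by linarith
end

section
/- Let S ⊆ ℝ^d be a compact r-convex set such that μ(B(x,ε) ∩ S) > 0 for all x ∈ S and ε > 0, and let X_1, X_2, … be i.i.d. uniform on S. Then the r-convex hull S_n = C_r({X_1,…,X_n}) satisfies d_H(S_n, S) → 0 almost surely. -/
/-!
Since `S` is `r`-convex, the hull of any sample contained in `S` stays inside `S`, so only the
other half of the Hausdorff distance matters: every point of `S` must be close to the hull, hence
to the sample. By the second Borel–Cantelli lemma, almost surely every open set of positive
probability is hit by some `X i`; the density hypothesis says every ball around a point of `S`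
has positive probability, so the sample is dense in `S`. Compactness of `S` then turns density
into uniform closeness after finitely many draws.
-/

open Metric Set Filter MeasureTheory

open ProbabilityTheory Topology

section RHull

variable {d : ℕ} (r : ℝ)

lemma subset_rHull (A : Set (EuclideanSpace ℝ (Fin d))) : A ⊆ rHull r A :=
  fun _ hx => mem_iInter₂.2 fun _ (hy : _ ∩ A = ∅) hxy => hy.subset ⟨hxy, hx⟩

variable {r}

lemma rHull_mono {A B : Set (EuclideanSpace ℝ (Fin d))} (h : A ⊆ B) : rHull r A ⊆ rHull r B :=
  biInter_mono (fun _ hy => subset_empty_iff.1 (hy ▸ inter_subset_inter_right _ h))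
    fun _ _ => subset_rfl

lemma RConvex.rHull_subset {A S : Set (EuclideanSpace ℝ (Fin d))} (hS : RConvex r S)
    (h : A ⊆ S) : rHull r A ⊆ S :=
  hS ▸ rHull_mono h

end RHull

lemma tendsto_hausdorffDist_of_subset_closure_range {α : Type*} [PseudoMetricSpace α]
    {S : Set α} (hS : IsCompact S) {Y : ℕ → α} (hY : S ⊆ closure (range Y))
    {T : ℕ → Set α} (hTS : ∀ n, T n ⊆ S) (hYT : ∀ n, Y '' Iio (n + 1) ⊆ T n) :
    Tendsto (fun n => hausdorffDist (T n) S) atTop (𝓝 0) := by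
  rw [Metric.tendsto_atTop]
  intro ε hε
  obtain ⟨t, htS, ht, hcover⟩ := hS.finite_cover_balls (e := ε / 4) (by positivity)
  choose idx hidx using fun y : t => mem_closure_range_iff.1 (hY (htS y.2)) (ε / 4) (by positivity)
  have := ht.to_subtype
  obtain ⟨N, hN⟩ := (finite_range idx).bddAbove
  refine ⟨N, fun n hn => ?_⟩
  have hclose : ∀ z ∈ S, infDist z (T n) ≤ ε / 2 := by
    intro z hz
    obtain ⟨y, hyt, hzy⟩ := mem_iUnion₂.1 (hcover hz)
    have hsample : Y (idx ⟨y, hyt⟩) ∈ T n :=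
      hYT n ⟨_, Nat.lt_succ_of_le ((hN ⟨_, rfl⟩).trans hn), rfl⟩
    calc infDist z (T n) ≤ dist z (Y (idx ⟨y, hyt⟩)) := infDist_le_dist_of_mem hsample
      _ ≤ dist z y + dist y (Y (idx ⟨y, hyt⟩)) := dist_triangle _ _ _
      _ ≤ ε / 2 := by linarith [mem_ball.1 hzy, hidx ⟨y, hyt⟩]
  have hle : hausdorffDist (T n) S ≤ ε / 2 :=
    hausdorffDist_le_of_infDist (by positivity)
      (fun x hx => (infDist_zero_of_mem (hTS n hx)).trans_le (by positivity)) hclose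
  rw [Real.dist_eq, sub_zero, abs_of_nonneg hausdorffDist_nonneg]
  linarith

section Sampling

variable {Ω α : Type*} [MeasurableSpace Ω] [MeasurableSpace α] {P : Measure Ω}
  {X : ℕ → Ω → α}

lemma ae_frequently_mem_of_iIndepFun (hmeas : ∀ i, Measurable (X i)) (hindep : iIndepFun X P)
    {B : Set α} (hB : MeasurableSet B) (hsum : ∑' i, P (X i ⁻¹' B) = ⊤) :
    ∀ᵐ ω ∂P, ∃ᶠ i in atTop, X i ω ∈ B := by
  have := hindep.isProbabilityMeasure
  have hindepSet : iIndepSet (fun i => X i ⁻¹' B) P :=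
    (iIndepSet_iff_meas_biInter fun i => hmeas i hB).2 fun s =>
      hindep.meas_biInter fun i _ => ⟨B, hB, rfl⟩
  have hlimsup := measure_limsup_eq_one (fun i => hmeas i hB) hindepSet hsum
  rw [← measure_univ (μ := P), ← ae_mem_iff_measure_eq] at hlimsup
  · simpa only [mem_limsup_iff_frequently_mem, mem_preimage] using hlimsup
  · exact (MeasurableSet.measurableSet_limsup fun i => hmeas i hB).nullMeasurableSet

lemma ae_forall_isOpen_exists_mem_of_iIndepFun [TopologicalSpace α] [SecondCountableTopology α]
    [OpensMeasurableSpace α] (hmeas : ∀ i, Measurable (X i)) (hindep : iIndepFun X P)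
    {ν : Measure α} (hdist : ∀ i, P.map (X i) = ν) :
    ∀ᵐ ω ∂P, ∀ V, IsOpen V → 0 < ν V → ∃ i, X i ω ∈ V := by
  set b := TopologicalSpace.countableBasis α
  have hb := TopologicalSpace.isBasis_countableBasis α
  have hbasis : ∀ᵐ ω ∂P, ∀ v ∈ b, 0 < ν v → ∃ i, X i ω ∈ v := by
    rw [ae_ball_iff (TopologicalSpace.countable_countableBasis α)]
    intro v hv
    have hvm : MeasurableSet v := (hb.isOpen hv).measurableSet
    by_cases hpos : 0 < ν v
    · have hsum : ∑' i, P (X i ⁻¹' v) = ⊤ := by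
        simp_rw [← Measure.map_apply (hmeas _) hvm, hdist]
        exact ENNReal.tsum_const_eq_top_of_ne_zero hpos.ne'
      filter_upwards [ae_frequently_mem_of_iIndepFun hmeas hindep hvm hsum] with ω hω
      exact fun _ => hω.exists
    · exact ae_of_all _ fun _ h => absurd h hpos
  filter_upwards [hbasis] with ω hω V hV hνV
  by_contra! hmiss
  have hnull : ν (⋃₀ {v ∈ b | v ⊆ V}) = 0 :=
    (measure_sUnion_null_iff ((TopologicalSpace.countable_countableBasis α).mono
      fun _ h => h.1)).2 fun v hv => nonpos_iff_eq_zero.1 <| not_lt.1 fun hpos =>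
        let ⟨i, hi⟩ := hω v hv.1 hpos
        hmiss i (hv.2 hi)
  rw [← hb.open_eq_sUnion' hV] at hnull
  exact hνV.ne' hnull

end Sampling

theorem rHull_estimator_hausdorff_consistency_general {d : ℕ} {r : ℝ}
    {S : Set (EuclideanSpace ℝ (Fin d))} (hS : IsCompact S) (hconv : RConvex r S)
    (hdense : ∀ x ∈ S, ∀ ε : ℝ, 0 < ε → 0 < volume (Metric.ball x ε ∩ S))
    {Ω : Type*} [MeasurableSpace Ω] (P : Measure Ω)
    (X : ℕ → Ω → EuclideanSpace ℝ (Fin d)) (hmeas : ∀ i, Measurable (X i))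
    (hindep : ProbabilityTheory.iIndepFun X P)
    (hdist : ∀ i, Measure.map (X i) P = (volume S)⁻¹ • volume.restrict S) :
    ∀ᵐ ω ∂P, Tendsto
      (fun n : ℕ =>
        Metric.hausdorffDist (rHull r ((fun i => X i ω) '' Set.Iio (n + 1))) S)
      atTop (nhds 0) := by
  have hsample_mem : ∀ᵐ ω ∂P, ∀ i, X i ω ∈ S := ae_all_iff.2 fun i =>
    ae_of_ae_map (hmeas i).aemeasurable <| by
      rw [hdist i]
      exact Measure.ae_smul_measure (ae_restrict_mem hS.isClosed.measurableSet) _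
  have hball_pos : ∀ x ∈ S, ∀ ε > 0, 0 < ((volume S)⁻¹ • volume.restrict S) (ball x ε) := by
    intro x hx ε hε
    rw [Measure.smul_apply, smul_eq_mul, Measure.restrict_apply measurableSet_ball]
    exact ENNReal.mul_pos (ENNReal.inv_ne_zero.2 hS.measure_lt_top.ne) (hdense x hx ε hε).ne'
  filter_upwards [hsample_mem, ae_forall_isOpen_exists_mem_of_iIndepFun hmeas hindep hdist]
    with ω hmem hhit
  refine tendsto_hausdorffDist_of_subset_closure_range hS (fun x hx => ?_)
    (fun n => hconv.rHull_subset (image_subset_iff.2 fun i _ => hmem i)) fun n => subset_rHull r _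
  exact mem_closure_range_iff.2 fun ε hε =>
    (hhit _ isOpen_ball (hball_pos x hx ε hε)).imp fun i hi => mem_ball'.1 hi

theorem rHull_estimator_hausdorff_consistency {d : ℕ} {r : ℝ} (hr : 0 < r)
    {S : Set (EuclideanSpace ℝ (Fin d))} (hS : IsCompact S) (hconv : RConvex r S)
    (hdense : ∀ x ∈ S, ∀ ε : ℝ, 0 < ε → 0 < volume (Metric.ball x ε ∩ S))
    (hpos : 0 < volume S)
    {Ω : Type*} [MeasurableSpace Ω] (P : Measure Ω) [IsProbabilityMeasure P]
    (X : ℕ → Ω → EuclideanSpace ℝ (Fin d)) (hmeas : ∀ i, Measurable (X i))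
    (hindep : ProbabilityTheory.iIndepFun X P)
    (hdist : ∀ i, Measure.map (X i) P = (volume S)⁻¹ • volume.restrict S) :
    ∀ᵐ ω ∂P, Tendsto
      (fun n : ℕ =>
        Metric.hausdorffDist (rHull r ((fun i => X i ω) '' Set.Iio (n + 1))) S)
      atTop (nhds 0) :=
  rHull_estimator_hausdorff_consistency_general hS hconv hdense P X hmeas hindep hdist
end

section
/- Let K ⊆ ℝ^d be compact with nonempty interior and r > 0. If A ⊆ K is a nonempty closed set with reach(A) ≥ r, then the Lebesgue measure of ∂A is zero: μ(∂A) = 0. -/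
open Metric Set MeasureTheory

/-! At a boundary point `x` of a closed set `A` of reach `≥ r`, every ball `closedBall x ρ` with
`ρ < r` contains a ball of radius `ρ / 8` missing `A`. To find it, maximise
`infDist · A - dist · z / 2` over `closedBall x (ρ / 2)`, for some `z ∉ A` close to `x`. At a
maximiser `w` with `infDist w A < ρ / 8`, the nearest point `p` of `w` in `A` is unique, so
`infDist · A` grows at unit rate as `w` moves away from `p`, while `dist · z / 2` grows at rate at
most `1 / 2`, contradicting maximality. Thus the boundary is porous, so it has no Lebesgue density
points, and by the Lebesgue density theorem it is null. -/

open Filter Topology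
open scoped RealInnerProductSpace ENNReal

theorem exists_pos_forall_dist_lt_of_unique_nearest {X : Type*} [MetricSpace X] [ProperSpace X]
    {A : Set X} (hA : IsClosed A) {w p : X} (huniq : ∀ y ∈ A, dist w y = infDist w A → y = p)
    {ε : ℝ} (hε : 0 < ε) : ∃ δ > 0, ∀ y ∈ A, dist w y < infDist w A + δ → dist y p < ε := by
  set s := infDist w A
  set K := (A ∩ closedBall w (s + 1)) \ ball p ε
  have hK : IsCompact K := ((isCompact_closedBall w _).inter_left hA).diff isOpen_ball
  have hfar : ∀ y ∈ K, s < dist w y := by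
    rintro y ⟨⟨hyA, -⟩, hyp⟩
    refine (infDist_le_dist_of_mem hyA).lt_of_ne fun h => hyp ?_
    rw [huniq y hyA h.symm]
    exact mem_ball_self hε
  obtain ⟨a, hsa, ha⟩ := hK.exists_forall_le'
    (by fun_prop : Continuous fun y => dist w y).continuousOn hfar
  refine ⟨min 1 (a - s), lt_min one_pos (sub_pos.2 hsa), fun y hyA hy => ?_⟩
  by_contra! hyp
  have hyw : y ∈ closedBall w (s + 1) := by
    rw [mem_closedBall, dist_comm]
    linarith [min_le_left 1 (a - s)]
  linarith [ha y ⟨⟨hyA, hyw⟩, by simpa using hyp⟩, min_le_right 1 (a - s)]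

section InnerProduct

variable {E : Type*} [NormedAddCommGroup E] [InnerProductSpace ℝ E]

theorem add_mul_lt_norm_add_smul_sub {p q u : E} {s t c : ℝ} (hu : ‖u‖ = 1) (ht : 0 < t)
    (hc₀ : 0 ≤ c) (hc : c < 1) (hfar : s ≤ ‖p + s • u - q‖) (hnear : ‖q - p‖ < (1 - c) * s) :
    s + c * t < ‖p + (s + t) • u - q‖ := by
  set v := p + s • u - q
  have hs : 0 < s := pos_of_mul_pos_right ((norm_nonneg _).trans_lt hnear) (sub_pos.2 hc).le
  have hvu : c * s < ⟪v, u⟫ := by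
    have hqp : ⟪q - p, u⟫ ≤ ‖q - p‖ := by simpa [hu] using real_inner_le_norm (q - p) u
    have hpq : ⟪p - q, u⟫ = -⟪q - p, u⟫ := by rw [← inner_neg_left, neg_sub]
    have : ⟪v, u⟫ = ⟪p - q, u⟫ + s := by
      rw [show v = (p - q) + s • u by module, inner_add_left, real_inner_smul_left,
        real_inner_self_eq_norm_sq, hu]
      ring
    nlinarith
  have hsq : ‖p + (s + t) • u - q‖ ^ 2 = ‖v‖ ^ 2 + 2 * t * ⟪v, u⟫ + t ^ 2 := by
    rw [show p + (s + t) • u - q = v + t • u by module, norm_add_sq_real, real_inner_smul_right,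
      norm_smul, hu, Real.norm_of_nonneg ht.le]
    ring
  have : (s + c * t) ^ 2 < ‖p + (s + t) • u - q‖ ^ 2 := by
    have hv : s ^ 2 ≤ ‖v‖ ^ 2 := pow_le_pow_left₀ hs.le hfar 2
    have hct : (c * t) ^ 2 ≤ t ^ 2 := pow_le_pow_left₀ (by positivity) (by nlinarith) 2
    rw [hsq]
    nlinarith [mul_lt_mul_of_pos_left hvu ht]
  exact lt_of_pow_lt_pow_left₀ 2 (norm_nonneg _) this

variable [ProperSpace E] {A : Set E}

theorem eventually_add_mul_lt_infDist_add_smul (hA : IsClosed A) {p u : E} {s c : ℝ}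
    (hu : ‖u‖ = 1) (hs₀ : 0 < s) (hs : infDist (p + s • u) A = s)
    (huniq : ∀ y ∈ A, dist (p + s • u) y = s → y = p) (hc₀ : 0 ≤ c) (hc : c < 1) :
    ∀ᶠ t in 𝓝[>] 0, s + c * t < infDist (p + (s + t) • u) A := by
  have hAne : A.Nonempty := nonempty_iff_ne_empty.2 fun h => by simp [h] at hs; linarith
  obtain ⟨δ, hδ, hclose⟩ := exists_pos_forall_dist_lt_of_unique_nearest hA
    (w := p + s • u) (fun y hy h => huniq y hy (h.trans hs))
    (mul_pos (sub_pos.2 hc) hs₀)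
  filter_upwards [Ioo_mem_nhdsGT (half_pos hδ)] with t ⟨ht, htδ⟩
  obtain ⟨q, hqA, hq⟩ := hA.exists_infDist_eq_dist hAne (p + (s + t) • u)
  have hmove : dist (p + s • u) (p + (s + t) • u) = t := by
    rw [dist_eq_norm, show p + s • u - (p + (s + t) • u) = -(t • u) by module, norm_neg,
      norm_smul, hu, Real.norm_of_nonneg ht.le, mul_one]
  -- a nearest point of the moved point is an approximate nearest point of `p + s • u`
  have hqw : dist (p + s • u) q < s + δ := by
    have := infDist_le_infDist_add_dist (x := p + (s + t) • u) (y := p + s • u) (s := A)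
    rw [dist_comm] at this
    linarith [dist_triangle (p + s • u) (p + (s + t) • u) q]
  rw [hq, dist_eq_norm]
  refine add_mul_lt_norm_add_smul_sub hu ht hc₀ hc ?_ ?_
  · rw [← dist_eq_norm]
    exact hs.ge.trans (infDist_le_dist_of_mem hqA)
  · rw [← dist_eq_norm]
    exact hclose q hqA (by rwa [hs])

end InnerProduct

def IsPorousAt {X : Type*} [PseudoMetricSpace X] (S : Set X) (κ : ℝ) (x : X) : Prop :=
  ∀ᶠ ρ in 𝓝[>] 0, ∃ w, ball w (κ * ρ) ⊆ closedBall x ρ \ S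

theorem IsPorousAt.mono {X : Type*} [PseudoMetricSpace X] {S T : Set X} {κ : ℝ} {x : X}
    (hT : IsPorousAt T κ x) (hST : S ⊆ T) : IsPorousAt S κ x :=
  Filter.Eventually.mono hT fun _ ⟨w, hw⟩ => ⟨w, hw.trans (sdiff_subset_sdiff_right hST)⟩

section Density

variable {E : Type*} [NormedAddCommGroup E] [NormedSpace ℝ E] [FiniteDimensional ℝ E]
  [MeasurableSpace E] [BorelSpace E] (μ : Measure E) [μ.IsAddHaarMeasure]

theorem measure_inter_closedBall_div_le_of_ball_subset {S : Set E} {x w : E} {κ ρ : ℝ}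
    (hκ : 0 < κ) (hρ : 0 < ρ) (hw : ball w (κ * ρ) ⊆ closedBall x ρ \ S) :
    μ (S ∩ closedBall x ρ) / μ (closedBall x ρ) ≤
      1 - ENNReal.ofReal (κ ^ Module.finrank ℝ E) := by
  set c := ENNReal.ofReal (κ ^ Module.finrank ℝ E)
  have hBtop : μ (closedBall x ρ) ≠ ∞ := measure_closedBall_lt_top.ne
  have hhole : μ (ball w (κ * ρ)) = c * μ (closedBall x ρ) := by
    rw [Measure.addHaar_ball_of_pos μ w (mul_pos hκ hρ), Measure.addHaar_closedBall μ x hρ.le,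
      ← mul_assoc, ← ENNReal.ofReal_mul (by positivity), mul_pow]
  have hsum : μ (S ∩ closedBall x ρ) + c * μ (closedBall x ρ) ≤ μ (closedBall x ρ) := by
    rw [← hhole, ← measure_union (disjoint_left.2 fun y hy hyw => (hw hyw).2 hy.1)
      measurableSet_ball]
    exact measure_mono (union_subset inter_subset_right fun y hy => (hw hy).1)
  refine ENNReal.div_le_of_le_mul ?_
  rw [ENNReal.sub_mul fun _ _ => hBtop, one_mul]
  exact ENNReal.le_sub_of_add_le_right (ENNReal.mul_ne_top ENNReal.ofReal_ne_top hBtop) hsum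

theorem IsPorousAt.not_tendsto_measure_inter_div {S : Set E} {κ : ℝ} {x : E}
    (hS : IsPorousAt S κ x) (hκ : 0 < κ) :
    ¬Tendsto (fun ρ => μ (S ∩ closedBall x ρ) / μ (closedBall x ρ)) (𝓝[>] 0) (𝓝 1) := by
  intro hdens
  set c := ENNReal.ofReal (κ ^ Module.finrank ℝ E)
  have hc : 1 - c < 1 :=
    ENNReal.sub_lt_self ENNReal.one_ne_top one_ne_zero (by positivity)
  obtain ⟨ρ, hρ, hlarge, w, hw⟩ :=
    (eventually_mem_nhdsWithin.and ((hdens.eventually (eventually_gt_nhds hc)).and hS)).exists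
  exact (measure_inter_closedBall_div_le_of_ball_subset μ hκ hρ hw).not_gt hlarge

theorem measure_eq_zero_of_forall_isPorousAt {S : Set E} {κ : ℝ} (hκ : 0 < κ)
    (hS : ∀ x ∈ S, IsPorousAt S κ x) : μ S = 0 := by
  rw [← Measure.restrict_apply_self]
  exact measure_mono_null (fun x hx => (hS x hx).not_tendsto_measure_inter_div μ hκ)
    (ae_iff.1 (Besicovitch.ae_tendsto_measure_inter_div μ S))

end Density

section Reach

variable {d : ℕ} {A : Set (EuclideanSpace ℝ (Fin d))} {r : ℝ}

theorem ReachGe.not_isLocalMax_infDist_sub_mul_dist (hreach : ReachGe A r) (hAc : IsClosed A)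
    {w z : EuclideanSpace ℝ (Fin d)} (hw₀ : 0 < infDist w A) (hwr : infDist w A < r) {c : ℝ}
    (hc₀ : 0 ≤ c) (hc : c < 1) : ¬IsLocalMax (fun y => infDist y A - c * dist y z) w := by
  intro hmax
  set s := infDist w A
  obtain ⟨p, ⟨-, hwp⟩, huniq⟩ := hreach w hwr
  set u := s⁻¹ • (w - p)
  have hw : p + s • u = w := by simp [u, smul_smul, hw₀.ne']
  have hu : ‖u‖ = 1 := by
    rw [norm_smul, ← dist_eq_norm, hwp, norm_inv, Real.norm_of_nonneg hw₀.le,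
      inv_mul_cancel₀ hw₀.ne']
  have hgrow := eventually_add_mul_lt_infDist_add_smul hAc hu hw₀ (by rw [hw])
    (by rw [hw]; exact fun y hy h => huniq y ⟨hy, h⟩) hc₀ hc
  have hpath : Tendsto (fun t : ℝ => p + (s + t) • u) (𝓝[>] 0) (𝓝 w) :=
    ((by fun_prop : Continuous fun t : ℝ => p + (s + t) • u).tendsto' 0 w
      (by simp [hw])).mono_left nhdsWithin_le_nhds
  obtain ⟨t, ht, hgt, hle⟩ :=
    (eventually_mem_nhdsWithin.and (hgrow.and (hpath.eventually hmax))).exists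
  have hmove : dist (p + (s + t) • u) z ≤ dist w z + t := by
    have := dist_self_add_left (t • u) w
    rw [norm_smul, hu, Real.norm_of_nonneg (le_of_lt ht), mul_one] at this
    rw [show p + (s + t) • u = w + t • u by rw [← hw]; module]
    linarith [dist_triangle (w + t • u) w z]
  have : c * dist (p + (s + t) • u) z ≤ c * (dist w z + t) :=
    mul_le_mul_of_nonneg_left hmove hc₀
  dsimp only at hle
  linarith

theorem ReachGe.exists_ball_subset_closedBall_diff (hreach : ReachGe A r) (hAc : IsClosed A)
    {x : EuclideanSpace ℝ (Fin d)} (hx : x ∈ frontier A) {ρ : ℝ} (hρ : 0 < ρ) (hρr : ρ < r) :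
    ∃ w, ball w (ρ / 8) ⊆ closedBall x ρ \ A := by
  obtain ⟨z, hzA, hxz⟩ : ∃ z ∈ Aᶜ, dist x z < ρ / 4 :=
    mem_closure_iff.1 (frontier_subset_closure (by rwa [frontier_compl])) _ (by positivity)
  have hz : 0 < infDist z A :=
    (hAc.notMem_iff_infDist_pos ⟨x, hAc.frontier_subset hx⟩).1 hzA
  set G := fun y => infDist y A - 1 / 2 * dist y z
  have hzB : z ∈ closedBall x (ρ / 2) := by
    rw [mem_closedBall, dist_comm]
    linarith
  obtain ⟨w, hwB, hwmax⟩ := (isCompact_closedBall x (ρ / 2)).exists_isMaxOn ⟨z, hzB⟩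
    (by fun_prop : Continuous G).continuousOn
  have hwA : ρ / 8 ≤ infDist w A := by
    by_contra! hsmall
    have hGw : infDist z A ≤ G w := by simpa [G] using hwmax hzB
    have hwz : 0 ≤ dist w z := dist_nonneg
    simp only [G] at hGw
    have hwx : w ∈ ball x (ρ / 2) := by
      rw [mem_ball]
      linarith [dist_triangle w z x, dist_comm x z]
    exact hreach.not_isLocalMax_infDist_sub_mul_dist hAc (by linarith) (by linarith)
      (by norm_num) (by norm_num) (hwmax.isLocalMax (closedBall_mem_nhds_of_mem hwx))
  refine ⟨w, fun y hy => ⟨?_, fun hyA => ?_⟩⟩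
  · rw [mem_closedBall]
    linarith [mem_ball.1 hy, dist_triangle y w x, mem_closedBall.1 hwB]
  · linarith [infDist_le_dist_of_mem hyA (x := w), mem_ball'.1 hy]


theorem ReachGe.isPorousAt (hreach : ReachGe A r) (hr : 0 < r) (hAc : IsClosed A)
    {x : EuclideanSpace ℝ (Fin d)} (hx : x ∈ frontier A) : IsPorousAt A (1 / 8) x := by
  filter_upwards [Ioo_mem_nhdsGT hr] with ρ ⟨hρ, hρr⟩
  simpa [div_eq_inv_mul] using hreach.exists_ball_subset_closedBall_diff hAc hx hρ hρr

end Reach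

theorem frontier_null_of_positive_reach_general {d : ℕ}
    {A : Set (EuclideanSpace ℝ (Fin d))} {r : ℝ}
    (hr : 0 < r) (hAc : IsClosed A)
    (hreach : ReachGe A r) :
    volume (frontier A) = 0 :=
  measure_eq_zero_of_forall_isPorousAt volume (by norm_num : (0 : ℝ) < 1 / 8) fun _ hx =>
    (hreach.isPorousAt hr hAc hx).mono hAc.frontier_subset

theorem frontier_null_of_positive_reach {d : ℕ}
    {K A : Set (EuclideanSpace ℝ (Fin d))} {r : ℝ}
    (hK : IsCompact K) (hKint : (interior K).Nonempty)
    (hr : 0 < r) (hAK : A ⊆ K) (hA : A.Nonempty) (hAc : IsClosed A)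
    (hreach : ReachGe A r) :
    volume (frontier A) = 0 :=
  frontier_null_of_positive_reach_general hr hAc hreach
end

section
/- Let S ⊆ ℝ^d be compact with reach(S) ≥ r > 0 and let x ∉ S with 0 < dist(x, S) < r. Let ξ(x) denote the unique nearest point of x in S, and set η = (x − ξ(x))/‖x − ξ(x)‖ and y = ξ(x) + r η. Then x lies in the open ball int B(y, r) and int B(y, r) ∩ S = ∅. -/
/-!
Follow an Euler polygon for the gradient flow of `dist(·, S)` from `x`: each step moves away from
the current nearest point. Since nearest points are unique below distance `r`, compactness makes
near-nearest points uniformly close, so along the polygon the distance to `S` grows at rate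
almost `1`. After length `τ` the polygon ends within `τ` of `x` and almost `dist(x, S) + τ` away
from `ξ`, hence close to the point `z` of the ray from `ξ` through `x` with
`‖z - ξ‖ = dist(x, S) + τ`. So `dist(z, S) = ‖z - ξ‖`: the open balls centred on the ray,
touching `ξ`, with radius `< r` miss `S`, and they exhaust `int B(y, r)`.
-/

open Metric Set

open Filter Topology
open scoped RealInnerProductSpace

def UniqueNearestPointsOn {X : Type*} [PseudoMetricSpace X] (S K : Set X) : Prop :=
  ∀ w ∈ K, {p ∈ S | dist w p = infDist w S}.Subsingleton

theorem ReachGe.uniqueNearestPointsOn {d : ℕ} {S : Set (EuclideanSpace ℝ (Fin d))} {r : ℝ}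
    (h : ReachGe S r) : UniqueNearestPointsOn S {w | infDist w S < r} :=
  fun w hw _ hp _ hq => (h w hw).unique hp hq

theorem UniqueNearestPointsOn.exists_pos_dist_lt {X : Type*} [PseudoMetricSpace X]
    {S K : Set X} (huniq : UniqueNearestPointsOn S K) (hK : IsCompact K) (hS : IsCompact S)
    {ε : ℝ} (hε : 0 < ε) :
    ∃ δ > 0, ∀ w ∈ K, ∀ p ∈ S, ∀ q ∈ S, dist w p < infDist w S + δ →
      dist w q < infDist w S + δ → dist p q < ε := by
  set T := (K ×ˢ S ×ˢ S) ∩ {z : X × X × X | ε ≤ dist z.2.1 z.2.2}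
  have hT : IsCompact T := (hK.prod (hS.prod hS)).inter_right
    (isClosed_le continuous_const (continuous_snd.fst.dist continuous_snd.snd))
  set excess : X × X × X → ℝ := fun z => max (dist z.1 z.2.1) (dist z.1 z.2.2) - infDist z.1 S
  have hexcess : Continuous excess :=
    ((continuous_fst.dist continuous_snd.fst).max (continuous_fst.dist continuous_snd.snd)).sub
      ((continuous_infDist_pt S).comp continuous_fst)
  rcases T.eq_empty_or_nonempty with hTe | hTne
  · exact ⟨1, one_pos, fun w hw p hp q hq _ _ =>
      not_le.1 fun hpq => hTe.subset (show (w, p, q) ∈ T from ⟨⟨hw, hp, hq⟩, hpq⟩)⟩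
  obtain ⟨⟨z₀, p₀, q₀⟩, ⟨⟨hz₀K, hp₀S, hq₀S⟩, hp₀q₀⟩, hmin⟩ :=
    hT.exists_isMinOn hTne hexcess.continuousOn
  refine ⟨excess (z₀, p₀, q₀), ?_, fun w hw p hp q hq hwp hwq => not_le.1 fun hpq => ?_⟩
  · by_contra! hle
    have hp₀ := infDist_le_dist_of_mem hp₀S (x := z₀)
    have hq₀ := infDist_le_dist_of_mem hq₀S (x := z₀)
    have hmax := max_le_iff.1 (sub_nonpos.1 hle)
    have hpq₀ : p₀ = q₀ :=
      huniq z₀ hz₀K ⟨hp₀S, le_antisymm hmax.1 hp₀⟩ ⟨hq₀S, le_antisymm hmax.2 hq₀⟩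
    simp only [mem_ofPred_eq, hpq₀, dist_self] at hp₀q₀
    linarith
  · have hle : excess (z₀, p₀, q₀) ≤ excess (w, p, q) := hmin ⟨⟨hw, hp, hq⟩, hpq⟩
    have hlt : max (dist w p) (dist w q) < infDist w S + excess (z₀, p₀, q₀) := max_lt hwp hwq
    simp only [excess] at hle hlt
    linarith

section InnerProductSpace

variable {E : Type*} [NormedAddCommGroup E] [InnerProductSpace ℝ E]

theorem dist_add_div_smul_sub_self {w q : E} {h : ℝ} (hm : 0 < dist w q) (hh : 0 ≤ h) :
    dist (w + (h / dist w q) • (w - q)) w = h := by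
  rw [dist_eq_norm, add_sub_cancel_left, norm_smul, ← dist_eq_norm,
    Real.norm_of_nonneg (by positivity), div_mul_cancel₀ _ hm.ne']

theorem dist_add_div_norm_smul (ξ v : E) (hv : v ≠ 0) (s t : ℝ) :
    dist (ξ + (s / ‖v‖) • v) (ξ + (t / ‖v‖) • v) = |s - t| := by
  rw [dist_add_left, dist_eq_norm, ← sub_smul, norm_smul, Real.norm_eq_abs, ← sub_div, abs_div,
    abs_norm, div_mul_cancel₀ _ (norm_ne_zero_iff.2 hv)]

/-- A point `p` of `S` that was far from `w` stays far after the step; one that was near lies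
within `eps` of `q`, and `q` being nearest puts it almost behind `q`. -/
theorem le_dist_add_div_smul_sub {w q p : E} {h eps : ℝ} (hm : 0 < dist w q)
    (hqp : dist w q ≤ dist w p) (hh : 0 ≤ h) (heps : eps ≤ dist w q)
    (hnear : dist w p ≤ dist w q + 2 * h → dist p q ≤ eps) :
    dist w q + h - h * (eps / dist w q) ^ 2 ≤ dist (w + (h / dist w q) • (w - q)) p := by
  set m := dist w q with hm_def
  have hs0 : 0 ≤ h * (eps / m) ^ 2 := by positivity
  have hwq : ‖w - q‖ = m := (dist_eq_norm w q).symm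
  by_cases hfar : m + 2 * h < dist w p
  · linarith [dist_triangle w (w + (h / m) • (w - q)) p, dist_comm w (w + (h / m) • (w - q)),
      dist_add_div_smul_sub_self hm hh]
  have hpq : ‖p - q‖ ≤ eps := dist_eq_norm p q ▸ hnear (not_lt.1 hfar)
  have hs1 : (eps / m) ^ 2 ≤ 1 := by
    rw [div_pow, div_le_one (by positivity)]
    exact pow_le_pow_left₀ ((norm_nonneg _).trans hpq) heps 2
  have hinner : 2 * ⟪w - q, p - q⟫ ≤ ‖p - q‖ ^ 2 := by
    have hexp : ‖w - p‖ ^ 2 = ‖w - q‖ ^ 2 - 2 * ⟪w - q, p - q⟫ + ‖p - q‖ ^ 2 := by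
      rw [← norm_sub_sq_real, sub_sub_sub_cancel_right]
    rw [hm_def, dist_eq_norm, dist_eq_norm] at hqp
    nlinarith [norm_nonneg (w - q)]
  have hsq : (m + h) ^ 2 - h * m * (eps / m) ^ 2 ≤ dist (w + (h / m) • (w - q)) p ^ 2 := by
    have hexp : dist (w + (h / m) • (w - q)) p ^ 2
        = (1 + h / m) ^ 2 * m ^ 2 - (1 + h / m) * (2 * ⟪w - q, p - q⟫) + ‖p - q‖ ^ 2 := by
      rw [dist_eq_norm, show w + (h / m) • (w - q) - p = (1 + h / m) • (w - q) - (p - q) by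
        rw [add_smul, one_smul]; abel, norm_sub_sq_real, real_inner_smul_left, norm_smul,
        Real.norm_of_nonneg (by positivity), hwq]
      ring
    have h1 : (1 + h / m) * (2 * ⟪w - q, p - q⟫) ≤ (1 + h / m) * ‖p - q‖ ^ 2 :=
      mul_le_mul_of_nonneg_left hinner (by positivity)
    have h2 : ‖p - q‖ ^ 2 ≤ eps ^ 2 := pow_le_pow_left₀ (norm_nonneg _) hpq 2
    have h3 : h * m * (eps / m) ^ 2 = h / m * eps ^ 2 := by field_simp
    have h4 : (1 + h / m) ^ 2 * m ^ 2 = (m + h) ^ 2 := by field_simp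
    nlinarith [div_nonneg hh hm.le]
  refine (abs_le_of_sq_le_sq' ?_ dist_nonneg).2
  nlinarith [mul_nonneg hs0 (sub_nonneg.2 hs1)]

theorem exists_dist_eq_and_le_infDist {S : Set E} (hS : IsCompact S) {w : E} {h eps : ℝ}
    (hpos : 0 < infDist w S) (hh : 0 ≤ h) (heps : eps ≤ infDist w S)
    (hnear : ∀ p ∈ S, ∀ q ∈ S, dist w p ≤ infDist w S + 2 * h →
      dist w q = infDist w S → dist p q ≤ eps) :
    ∃ w', dist w' w = h ∧ infDist w S + h - h * (eps / infDist w S) ^ 2 ≤ infDist w' S := by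
  have hne : S.Nonempty := nonempty_iff_ne_empty.2 fun hS => by simp [hS] at hpos
  obtain ⟨q, hqS, hq⟩ := hS.exists_infDist_eq_dist hne w
  rw [hq] at hpos heps hnear ⊢
  exact ⟨_, dist_add_div_smul_sub_self hpos hh, (le_infDist hne).2 fun p hp =>
    le_dist_add_div_smul_sub hpos (hq ▸ infDist_le_dist_of_mem hp) hh heps
      fun hwp => hnear p hp q hqS hwp rfl⟩

/-- The Euler polygon of the gradient flow of `infDist · S`, with `N` steps of length `τ / N`. -/
theorem exists_dist_le_and_add_sub_le_infDist [ProperSpace E] {S : Set E} (hS : IsCompact S)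
    {x : E} {τ e : ℝ} (huniq : UniqueNearestPointsOn S (closedBall x τ))
    (hx : 0 < infDist x S) (hτ : 0 < τ) (he : 0 < e) :
    ∃ w, dist w x ≤ τ ∧ infDist x S + τ - e ≤ infDist w S := by
  set d := infDist x S
  set eps := d * min 1 (e / τ)
  have heps : 0 < eps := by positivity
  have hepsd : eps ≤ d := mul_le_of_le_one_right hx.le (min_le_left _ _)
  have hloss : τ * (eps / d) ^ 2 ≤ e := by
    have hmin : min 1 (e / τ) ^ 2 ≤ e / τ :=
      (pow_le_of_le_one (by positivity) (min_le_left _ _) two_ne_zero).trans (min_le_right _ _)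
    rw [mul_div_cancel_left₀ _ hx.ne']
    exact (mul_le_mul_of_nonneg_left hmin hτ.le).trans (mul_div_cancel₀ e hτ.ne').le
  have hratio : (eps / d) ^ 2 ≤ 1 := pow_le_one₀ (by positivity) ((div_le_one hx).2 hepsd)
  obtain ⟨δ, hδ, hmod⟩ := huniq.exists_pos_dist_lt (isCompact_closedBall x τ) hS heps
  obtain ⟨N, hN⟩ := exists_nat_gt (2 * τ / δ)
  have hNpos : (0 : ℝ) < N := lt_trans (by positivity) hN
  set h := τ / N
  have hh : 0 ≤ h := by positivity
  have hNh : N * h = τ := mul_div_cancel₀ τ hNpos.ne'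
  have h2h : 2 * h < δ := by
    rw [div_lt_iff₀ hδ] at hN
    rw [← mul_div_assoc, div_lt_iff₀ hNpos]
    linarith
  have hgain : 0 ≤ h - h * (eps / d) ^ 2 := by nlinarith
  have hpolygon : ∀ k ≤ N, ∃ w, dist w x ≤ k * h ∧
      d + k * (h - h * (eps / d) ^ 2) ≤ infDist w S := by
    intro k
    induction k with
    | zero => exact fun _ => ⟨x, by simp, by simp [d]⟩
    | succ k ih =>
      intro hk
      obtain ⟨w, hwx, hwS⟩ := ih (by omega)
      have hkh : k * h ≤ τ :=
        hNh ▸ mul_le_mul_of_nonneg_right (by exact_mod_cast (by omega : k ≤ N)) hh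
      have hdw : d ≤ infDist w S := by nlinarith [(Nat.cast_nonneg k : (0 : ℝ) ≤ k)]
      obtain ⟨w', hw'w, hw'S⟩ := exists_dist_eq_and_le_infDist hS (hx.trans_le hdw) hh
        (hepsd.trans hdw) fun p hp q hq hwp hwq =>
          (hmod w (mem_closedBall.2 (hwx.trans hkh)) p hp q hq (by linarith) (by linarith)).le
      have hshrink : (eps / infDist w S) ^ 2 ≤ (eps / d) ^ 2 :=
        pow_le_pow_left₀ (div_nonneg heps.le infDist_nonneg)
          (div_le_div_of_nonneg_left heps.le hx hdw) 2
      refine ⟨w', ?_, ?_⟩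
      · push_cast
        linarith [dist_triangle w' w x]
      · push_cast
        nlinarith [mul_le_mul_of_nonneg_left hshrink hh]
  obtain ⟨w, hwx, hwS⟩ := hpolygon N le_rfl
  refine ⟨w, hNh ▸ hwx, ?_⟩
  have hsum : N * (h - h * (eps / d) ^ 2) = τ - τ * (eps / d) ^ 2 := by
    rw [mul_sub, ← mul_assoc, hNh]
  linarith

theorem norm_sub_ray_sq_le {x ξ w : E} {t e : ℝ} (hxξ : 0 < ‖x - ξ‖)
    (hwx : ‖w - x‖ ≤ t - ‖x - ξ‖) (hwξ : t - e ≤ ‖w - ξ‖) (he : e ≤ t) :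
    ‖w - (ξ + (t / ‖x - ξ‖) • (x - ξ))‖ ^ 2 ≤ 2 * t * (t - ‖x - ξ‖) * e / ‖x - ξ‖ := by
  set d := ‖x - ξ‖
  have hτ : 0 ≤ t - d := (norm_nonneg _).trans hwx
  have hξ : ‖w - ξ‖ ^ 2 = ‖w - x‖ ^ 2 + 2 * ⟪w - x, x - ξ⟫ + d ^ 2 := by
    rw [← norm_add_sq_real, sub_add_sub_cancel]
  have hz : d * ‖w - (ξ + (t / d) • (x - ξ))‖ ^ 2
      = d * ‖w - x‖ ^ 2 - 2 * (t - d) * ⟪w - x, x - ξ⟫ + d * (t - d) ^ 2 := by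
    have hsplit : w - (ξ + (t / d) • (x - ξ)) = (w - x) - ((t - d) / d) • (x - ξ) := by
      rw [sub_div, div_self hxξ.ne', sub_smul, one_smul]; abel
    rw [hsplit, norm_sub_sq_real, real_inner_smul_right, norm_smul,
      Real.norm_of_nonneg (by positivity)]
    field_simp
    ring
  rw [le_div_iff₀ hxξ, mul_comm]
  have hwx2 : ‖w - x‖ ^ 2 ≤ (t - d) ^ 2 := pow_le_pow_left₀ (norm_nonneg _) hwx 2
  have hwξ2 : (t - e) ^ 2 ≤ ‖w - ξ‖ ^ 2 := pow_le_pow_left₀ (by linarith) hwξ 2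
  nlinarith [mul_le_mul_of_nonneg_left hwx2 (by linarith : (0 : ℝ) ≤ t),
    mul_le_mul_of_nonneg_left hwξ2 hτ, mul_nonneg hτ (sq_nonneg e)]

theorem le_infDist_ray [ProperSpace E] {S : Set E} (hS : IsCompact S) {x ξ : E} {t : ℝ}
    (hξ : ξ ∈ S) (hproj : ‖x - ξ‖ = infDist x S) (hpos : 0 < ‖x - ξ‖) (ht : ‖x - ξ‖ < t)
    (huniq : UniqueNearestPointsOn S (closedBall x (t - ‖x - ξ‖))) :
    t ≤ infDist (ξ + (t / ‖x - ξ‖) • (x - ξ)) S := by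
  set d := ‖x - ξ‖
  set C := 2 * t * (t - d) / d
  have hlim : Tendsto (fun e => t - e - √(C * e)) (𝓝[>] 0) (𝓝 t) := by
    have hcont : Continuous fun e => t - e - √(C * e) := by fun_prop
    simpa using (hcont.tendsto 0).mono_left nhdsWithin_le_nhds
  refine le_of_tendsto hlim (eventually_of_mem (Ioo_mem_nhdsGT (by linarith : (0 : ℝ) < t))
    fun e ⟨he, het⟩ => ?_)
  obtain ⟨w, hwx, hwS⟩ :=
    exists_dist_le_and_add_sub_le_infDist hS huniq (hproj ▸ hpos) (sub_pos.2 ht) he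
  have hwξ : t - e ≤ ‖w - ξ‖ := by
    rw [← dist_eq_norm]
    linarith [infDist_le_dist_of_mem hξ (x := w)]
  have hwz : dist w (ξ + (t / d) • (x - ξ)) ≤ √(C * e) := by
    rw [dist_eq_norm, show C * e = 2 * t * (t - d) * e / d by ring]
    exact Real.le_sqrt_of_sq_le
      (norm_sub_ray_sq_le hpos (by rwa [dist_eq_norm] at hwx) hwξ het.le)
  linarith [infDist_le_infDist_add_dist (s := S) (x := w) (y := ξ + (t / d) • (x - ξ))]

end InnerProductSpace

theorem normal_ball_misses_set_general {d : ℕ} {S : Set (EuclideanSpace ℝ (Fin d))} {r : ℝ}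
    (hS : IsCompact S) (hreach : ReachGe S r)
    {x ξ : EuclideanSpace ℝ (Fin d)}
    (hpos : 0 < Metric.infDist x S) (hlt : Metric.infDist x S < r)
    (hξ : ξ ∈ S) (hproj : dist x ξ = Metric.infDist x S) :
    x ∈ Metric.ball (ξ + (r / ‖x - ξ‖) • (x - ξ)) r ∧
      Metric.ball (ξ + (r / ‖x - ξ‖) • (x - ξ)) r ∩ S = ∅ := by
  rw [dist_eq_norm] at hproj
  rw [← hproj] at hpos hlt
  have hv : x - ξ ≠ 0 := norm_pos_iff.1 hpos
  set y := ξ + (r / ‖x - ξ‖) • (x - ξ)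
  refine ⟨?_, eq_empty_iff_forall_notMem.2 fun p ⟨hpy, hpS⟩ => ?_⟩
  · have hxy := dist_add_div_norm_smul ξ _ hv ‖x - ξ‖ r
    rw [div_self hpos.ne', one_smul, add_sub_cancel, abs_of_neg (by linarith)] at hxy
    rw [mem_ball, hxy]
    linarith
  rw [mem_ball] at hpy
  set t := max ((‖x - ξ‖ + r) / 2) ((dist p y + 3 * r) / 4)
  have htr : t < r := max_lt (by linarith) (by linarith)
  have hxt : ‖x - ξ‖ < t := lt_max_of_lt_left (by linarith)
  have htp : (dist p y + 3 * r) / 4 ≤ t := le_max_right _ _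
  have hball : closedBall x (t - ‖x - ξ‖) ⊆ {w | infDist w S < r} := fun w hw => by
    show infDist w S < r
    linarith [mem_closedBall.1 hw, infDist_le_infDist_add_dist (s := S) (x := w) (y := x)]
  have hray := le_infDist_ray hS hξ hproj hpos hxt fun w hw =>
    hreach.uniqueNearestPointsOn w (hball hw)
  have hzy : dist (ξ + (t / ‖x - ξ‖) • (x - ξ)) y = r - t := by
    rw [dist_add_div_norm_smul ξ _ hv, abs_of_neg (by linarith)]
    ring
  linarith [infDist_le_dist_of_mem hpS (x := ξ + (t / ‖x - ξ‖) • (x - ξ)),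
    dist_triangle (ξ + (t / ‖x - ξ‖) • (x - ξ)) y p, dist_comm p y, htp]

theorem normal_ball_misses_set {d : ℕ} {S : Set (EuclideanSpace ℝ (Fin d))} {r : ℝ}
    (hS : IsCompact S) (hr : 0 < r) (hreach : ReachGe S r)
    {x ξ : EuclideanSpace ℝ (Fin d)} (hx : x ∉ S)
    (hpos : 0 < Metric.infDist x S) (hlt : Metric.infDist x S < r)
    (hξ : ξ ∈ S) (hproj : dist x ξ = Metric.infDist x S) :
    x ∈ Metric.ball (ξ + (r / ‖x - ξ‖) • (x - ξ)) r ∧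
      Metric.ball (ξ + (r / ‖x - ξ‖) • (x - ξ)) r ∩ S = ∅ :=
  normal_ball_misses_set_general hS hreach hpos hlt hξ hproj
end
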